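/- arXiv:1012.5393 — 2 statements merged into one kernel-verified Lean document; each statement's English description precedes it below -/
import Mathlib

section
/- Let G be a finite abelian group and A an S-ring over G satisfying the U/L-condition for A-subgroups L ≤ U; set S = U/L. Then A is schurian if and only if the S-rings A_U and A_{G/L} are schurian and there exist permutation groups Δ_U ≤ Sym(U) and Δ₀ ≤ Sym(G/L) such that: U_right ≤ Δ_U and (G/L)_right ≤ Δ₀; Δ_U permutes the cosets of L contained in U; the group (Δ_U)^{U/L} of permutations of S induced by Δ_U coincides with the group (Δ₀)^{U/L} of permutations of S induced by the elements of the setwise stabilizer in Δ₀ of the subset U/L of G/L; Δ_U is 2-equivalent to Aut(A_U); and Δ₀ is 2-equivalent to Aut(A_{G/L}). -/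
open scoped Pointwise

/-- `X` is a union of members of the family `B` of sets. -/
def IsUnionOf {V : Type*} (B : Set (Set V)) (X : Set V) : Prop :=
  ∀ Y ∈ B, (Y ∩ X).Nonempty → Y ⊆ X

/-- An S-ring over a group `G`, presented by the partition of `G` into its basic sets.
The field `structConst` states exactly that the ℤ-span of the sums `∑_{x ∈ X} x`
(`X` a basic set) is closed under multiplication in the group ring `ℤG`, i.e. that this
span is a subring of `ℤG`. -/
structure SRing (G : Type*) [Group G] where
  basic : Set (Set G)
  isPartition : Setoid.IsPartition basic
  one_mem : {(1 : G)} ∈ basic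
  inv_mem : ∀ X ∈ basic, X⁻¹ ∈ basic
  structConst : ∀ X ∈ basic, ∀ Y ∈ basic, ∀ Z ∈ basic, ∀ z ∈ Z, ∀ z' ∈ Z,
      Set.ncard {p : G × G | p.1 ∈ X ∧ p.2 ∈ Y ∧ p.1 * p.2 = z}
        = Set.ncard {p : G × G | p.1 ∈ X ∧ p.2 ∈ Y ∧ p.1 * p.2 = z'}

/-- The group `G_right` of right translations, as a subgroup of `Sym(G)`. -/
def rightMulGroup (G : Type*) [Group G] : Subgroup (Equiv.Perm G) where
  carrier := {γ | ∃ g : G, ∀ x, γ x = x * g}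
  one_mem' := ⟨1, fun x => (mul_one x).symm⟩
  mul_mem' := by
    rintro γ δ ⟨g, hg⟩ ⟨h, hh⟩
    exact ⟨h * g, fun x => by simp only [Equiv.Perm.mul_apply, hg, hh, mul_assoc]⟩
  inv_mem' := by
    rintro γ ⟨g, hg⟩
    refine ⟨g⁻¹, fun x => γ.injective ?_⟩
    rw [show γ (γ⁻¹ x) = x from γ.apply_symm_apply x, hg, inv_mul_cancel_right]

/-- The radical `rad(X) = {g : gX = Xg = X}` of a subset of a group. -/
def radSet {G : Type*} [Group G] (X : Set G) : Set G :=
  {g : G | (fun y => g * y) '' X = X ∧ (fun y => y * g) '' X = X}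

namespace SRing

variable {G : Type*} [Group G]

/-- `X` is an `A`-set, i.e. a union of basic sets of `A`. -/
def IsASet (A : SRing G) (X : Set G) : Prop := IsUnionOf A.basic X

/-- The automorphism group of an S-ring, as a subgroup of `Sym(G)`. -/
def aut (A : SRing G) : Subgroup (Equiv.Perm G) where
  carrier := {f | ∀ X ∈ A.basic, ∀ g h : G, h * g⁻¹ ∈ X ↔ f h * (f g)⁻¹ ∈ X}
  one_mem' := fun X _ g h => Iff.rfl
  mul_mem' := by
    intro f f' hf hf' X hX g h
    exact (hf' X hX g h).trans (hf X hX (f' g) (f' h))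
  inv_mem' := by
    intro f hf X hX g h
    simpa using (hf X hX (f⁻¹ g) (f⁻¹ h)).symm

/-- An S-ring is schurian if its basic sets are the orbits of the stabilizer of `1`
in some permutation group `Γ` with `G_right ≤ Γ ≤ Sym(G)`. -/
def IsSchurian (A : SRing G) : Prop :=
  ∃ Γ : Subgroup (Equiv.Perm G), rightMulGroup G ≤ Γ ∧
    A.basic = {X : Set G | ∃ x : G, X = {y : G | ∃ γ ∈ Γ, γ 1 = 1 ∧ γ x = y}}

/-- An S-ring is normal if `G_right` is a normal subgroup of its automorphism group. -/
def IsNormal (A : SRing G) : Prop :=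
  rightMulGroup G ≤ A.aut ∧
    ∀ f ∈ A.aut, ∀ γ ∈ rightMulGroup G, f * γ * f⁻¹ ∈ rightMulGroup G

/-- The basic sets of the restriction `A_U` of `A` to a subgroup `U`. -/
def resBasic (A : SRing G) (U : Subgroup G) : Set (Set U) :=
  {Xr | ∃ X ∈ A.basic, X ⊆ ↑U ∧ Xr = ((↑) : U → G) ⁻¹' X}

/-- The basic sets of the quotient S-ring `A_{G/L}`. -/
def quotBasic (A : SRing G) (L : Subgroup G) : Set (Set (G ⧸ L)) :=
  {Xq | ∃ X ∈ A.basic, Xq = QuotientGroup.mk '' X}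

/-- The basic sets of the S-ring `A_{U/L}` over the section `U/L`. -/
def secBasic (A : SRing G) (U L : Subgroup G) : Set (Set (U ⧸ L.subgroupOf U)) :=
  {Xs | ∃ X ∈ A.basic, X ⊆ ↑U ∧
    Xs = QuotientGroup.mk '' (((↑) : U → G) ⁻¹' X)}

/-- The `U/L`-condition: `L` and `U` are `A`-subgroups, `L ≤ U`, `L` is normal in `G`, and
every basic set of `A` outside of `U` is a union of `L`-cosets. -/
def ULcondition (A : SRing G) (L U : Subgroup G) : Prop :=
  L.Normal ∧ L ≤ U ∧ A.IsASet ↑L ∧ A.IsASet ↑U ∧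
    ∀ X ∈ A.basic, X ⊆ (↑U : Set G)ᶜ → (↑L : Set G) * X = X ∧ X * (↑L : Set G) = X

/-- `B` is a proper (nontrivial) wreath product. -/
def IsProperWreath {K : Type*} [Group K] (B : SRing K) : Prop :=
  ∃ H : Subgroup K, B.IsASet ↑H ∧ H ≠ ⊥ ∧ H ≠ ⊤ ∧
    ∀ X ∈ B.basic, X ⊆ (↑H : Set K)ᶜ → (↑H : Set K) * X = X ∧ X * (↑H : Set K) = X

end SRing

/-- Two sets of permutations of `V` are 2-equivalent iff they have the same orbits in the
coordinatewise action on `V × V`. -/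
def TwoEquiv {V : Type*} (Γ Δ : Set (Equiv.Perm V)) : Prop :=
  ∀ p : V × V,
    {q : V × V | ∃ γ ∈ Γ, q = (γ p.1, γ p.2)} = {q : V × V | ∃ δ ∈ Δ, q = (δ p.1, δ p.2)}

/-- The holomorph `Hol(S)`, as a set of permutations of `S`. -/
def HolSet (S : Type*) [Group S] : Set (Equiv.Perm S) :=
  {π | ∃ (σ : S ≃* S) (s : S), ∀ x, π x = σ x * s}

/-- Permutations of `G ⧸ L` induced by the members of a set `Γ` of permutations of `G`. -/
def inducedQuot {G : Type*} [Group G] (Γ : Set (Equiv.Perm G)) (L : Subgroup G) :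
    Set (Equiv.Perm (G ⧸ L)) :=
  {σ | ∃ γ ∈ Γ, ∀ x : G, σ (QuotientGroup.mk x) = QuotientGroup.mk (γ x)}

/-- Permutations of the section `U/L` induced by the members of a set `Γ` of permutations
of `G` stabilizing `U` setwise. -/
def inducedSec {G : Type*} [Group G] (Γ : Set (Equiv.Perm G)) (U L : Subgroup G) :
    Set (Equiv.Perm (U ⧸ L.subgroupOf U)) :=
  {σ | ∃ γ ∈ Γ, (∀ u : U, γ ↑u ∈ U) ∧
    ∀ u v : U, γ ↑u = ↑v → σ (QuotientGroup.mk u) = QuotientGroup.mk v}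

/-- Permutations of the section `U/L` induced by the members of a set `Δ` of permutations
of `G ⧸ L` stabilizing the image of `U` setwise. -/
def inducedSecOfQuot {G : Type*} [Group G] {L : Subgroup G} (Δ : Set (Equiv.Perm (G ⧸ L)))
    (U : Subgroup G) : Set (Equiv.Perm (U ⧸ L.subgroupOf U)) :=
  {σ | ∃ δ ∈ Δ,
    (∀ u : U, ∃ v : U, δ (QuotientGroup.mk (u : G)) = QuotientGroup.mk (v : G)) ∧
    ∀ u v : U, δ (QuotientGroup.mk (u : G)) = QuotientGroup.mk (v : G) →
      σ (QuotientGroup.mk u) = QuotientGroup.mk v}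

/-- `H` is a normal subgroup of `K` (both being subgroups of some ambient group). -/
def NormalIn {Γ : Type*} [Group Γ] (H K : Subgroup Γ) : Prop :=
  H ≤ K ∧ ∀ x ∈ K, ∀ h ∈ H, x * h * x⁻¹ ∈ H

/-- `H` is a composition series of the ambient group `Γ`: a chain
`⊥ = H 0 ⊴ H 1 ⊴ ⋯ ⊴ H m = ⊤` in which each term is a maximal proper normal subgroup
of the next one (equivalently, all successive quotients are simple). -/
def IsCompSeries {Γ : Type*} [Group Γ] {m : ℕ} (H : Fin (m + 1) → Subgroup Γ) : Prop :=
  H 0 = ⊥ ∧ H (Fin.last m) = ⊤ ∧ ∀ i : Fin m,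
    NormalIn (H i.castSucc) (H i.succ) ∧ H i.castSucc ≠ H i.succ ∧
    ∀ K : Subgroup Γ, H i.castSucc ≤ K → NormalIn K (H i.succ) →
      K = H i.castSucc ∨ K = H i.succ

/-- `Q` is a composition factor of `Γ`: `Q` is isomorphic (via a surjection with the right
kernel) to a successive quotient of some composition series of `Γ`. -/
def IsCompFactor (Γ : Type*) [Group Γ] (Q : Type*) [Group Q] : Prop :=
  ∃ (m : ℕ) (H : Fin (m + 1) → Subgroup Γ), IsCompSeries H ∧
    ∃ (i : Fin m) (φ : ↥(H i.succ) →* Q), Function.Surjective φ ∧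
      φ.ker = (H i.castSucc).subgroupOf (H i.succ)

section Aux1
open Equiv

variable {K : Type*} [Group K]

/-- Orbit of `x` under the stabilizer of `1` in `Γ`. -/
def orb1 (Γ : Subgroup (Equiv.Perm K)) (x : K) : Set K :=
  {y | ∃ γ ∈ Γ, γ 1 = 1 ∧ γ x = y}

lemma mulRight_mem_rightMulGroup (a : K) : Equiv.mulRight a ∈ rightMulGroup K :=
  ⟨a, fun _ => rfl⟩

lemma mem_orb1_self (Γ : Subgroup (Equiv.Perm K)) (x : K) : x ∈ orb1 Γ x :=
  ⟨1, Γ.one_mem, rfl, rfl⟩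

lemma orb1_eq_of_mem {Γ : Subgroup (Equiv.Perm K)} {x y : K} (h : y ∈ orb1 Γ x) :
    orb1 Γ y = orb1 Γ x := by
  obtain ⟨γ, hγ, h1, hxy⟩ := h
  ext z
  constructor
  · rintro ⟨μ, hμ, hμ1, rfl⟩
    exact ⟨μ * γ, Γ.mul_mem hμ hγ, by simp [Equiv.Perm.mul_apply, h1, hμ1],
      by simp [Equiv.Perm.mul_apply, hxy]⟩
  · rintro ⟨μ, hμ, hμ1, rfl⟩
    refine ⟨μ * γ⁻¹, Γ.mul_mem hμ (Γ.inv_mem hγ), ?_, ?_⟩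
    · have : γ⁻¹ (1 : K) = 1 := by
        conv_lhs => rw [← h1]
        simp
      simp [Equiv.Perm.mul_apply, this, hμ1]
    · have : γ⁻¹ y = x := by
        rw [← hxy]; simp
      simp [Equiv.Perm.mul_apply, this]

lemma orb1_mono {Γ Θ : Subgroup (Equiv.Perm K)} (h : ∀ γ ∈ Γ, γ ∈ Θ) (x : K) :
    orb1 Γ x ⊆ orb1 Θ x := by
  rintro y ⟨γ, hγ, h1, rfl⟩
  exact ⟨γ, h γ hγ, h1, rfl⟩

lemma orb1_shift {Θ : Subgroup (Equiv.Perm K)} (hΘ : rightMulGroup K ≤ Θ) {γ : Equiv.Perm K}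
    (hγ : γ ∈ Θ) (g h : K) : γ h * (γ g)⁻¹ ∈ orb1 Θ (h * g⁻¹) := by
  refine ⟨Equiv.mulRight (γ g)⁻¹ * γ * Equiv.mulRight g,
    Θ.mul_mem (Θ.mul_mem (hΘ (mulRight_mem_rightMulGroup _)) hγ)
      (hΘ (mulRight_mem_rightMulGroup _)), ?_, ?_⟩
  · simp [Equiv.Perm.mul_apply]
  · simp [Equiv.Perm.mul_apply, inv_mul_cancel_right]

lemma twoEquiv_orb1 {Γ Δ : Subgroup (Equiv.Perm K)} (h : TwoEquiv (Γ : Set (Equiv.Perm K)) (Δ : Set (Equiv.Perm K))) (x : K) :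
    orb1 Γ x = orb1 Δ x := by
  have key := h (1, x)
  ext y
  constructor
  · rintro ⟨γ, hγ, h1, rfl⟩
    have : ((1 : K), γ x) ∈ {q : K × K | ∃ γ' ∈ (↑Γ : Set (Equiv.Perm K)), q = (γ' 1, γ' x)} :=
      ⟨γ, hγ, by rw [h1]⟩
    rw [key] at this
    obtain ⟨δ, hδ, heq⟩ := this
    obtain ⟨e1, e2⟩ := Prod.mk.injEq .. ▸ heq
    exact ⟨δ, hδ, e1.symm, e2.symm⟩
  · rintro ⟨δ, hδ, h1, rfl⟩
    have : ((1 : K), δ x) ∈ {q : K × K | ∃ δ' ∈ (↑Δ : Set (Equiv.Perm K)), q = (δ' 1, δ' x)} :=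
      ⟨δ, hδ, by rw [h1]⟩
    rw [← key] at this
    obtain ⟨γ, hγ, heq⟩ := this
    obtain ⟨e1, e2⟩ := Prod.mk.injEq .. ▸ heq
    exact ⟨γ, hγ, e1.symm, e2.symm⟩

lemma pair_orbit {Θ : Subgroup (Equiv.Perm K)} (hΘ : rightMulGroup K ≤ Θ) (p : K × K) :
    {q : K × K | ∃ δ ∈ (↑Θ : Set (Equiv.Perm K)), q = (δ p.1, δ p.2)}
      = {q : K × K | q.2 * q.1⁻¹ ∈ orb1 Θ (p.2 * p.1⁻¹)} := by
  ext ⟨q1, q2⟩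
  simp only [Set.mem_setOf_eq]
  constructor
  · rintro ⟨δ, hδ, heq⟩
    obtain ⟨e1, e2⟩ := Prod.mk.injEq .. ▸ heq
    rw [e1, e2]
    exact orb1_shift hΘ hδ p.1 p.2
  · rintro ⟨μ, hμ, hμ1, hμx⟩
    refine ⟨Equiv.mulRight q1 * μ * Equiv.mulRight p.1⁻¹,
      Θ.mul_mem (Θ.mul_mem (hΘ (mulRight_mem_rightMulGroup _)) hμ)
        (hΘ (mulRight_mem_rightMulGroup _)), ?_⟩
    have hp1 : (Equiv.mulRight q1 * μ * Equiv.mulRight p.1⁻¹) p.1 = q1 := by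
      simp [Equiv.Perm.mul_apply, hμ1]
    have hp2 : (Equiv.mulRight q1 * μ * Equiv.mulRight p.1⁻¹) p.2 = q2 := by
      simp only [Equiv.Perm.mul_apply, Equiv.coe_mulRight]
      rw [hμx]
      simp
    rw [hp1, hp2]

lemma twoEquiv_of_orb1_eq {Θ Θ' : Subgroup (Equiv.Perm K)} (hΘ : rightMulGroup K ≤ Θ)
    (hΘ' : rightMulGroup K ≤ Θ') (h : ∀ x, orb1 Θ x = orb1 Θ' x) :
    TwoEquiv (Θ : Set (Equiv.Perm K)) (Θ' : Set (Equiv.Perm K)) := by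
  intro p
  rw [pair_orbit hΘ, pair_orbit hΘ', h]

end Aux1
section Aux2

namespace SRing

variable {G : Type*} [Group G] (A : SRing G)

lemma exists_basic_mem (x : G) : ∃ X ∈ A.basic, x ∈ X := by
  obtain ⟨X, ⟨hX, hx⟩, -⟩ := A.isPartition.2 x
  exact ⟨X, hX, hx⟩

lemma basic_eq_of_mem {X Y : Set G} (hX : X ∈ A.basic) (hY : Y ∈ A.basic) {x : G}
    (hx : x ∈ X) (hy : x ∈ Y) : X = Y := by
  obtain ⟨B, -, hu⟩ := A.isPartition.2 x
  rw [hu X ⟨hX, hx⟩, hu Y ⟨hY, hy⟩]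

lemma isASet_basic {X : Set G} (hX : X ∈ A.basic) : A.IsASet X := by
  rintro Y hY ⟨z, hz1, hz2⟩
  rw [A.basic_eq_of_mem hY hX hz1 hz2]

lemma basic_subset_of_aset {W X : Set G} {x : G} (hW : A.IsASet W) (hX : X ∈ A.basic)
    (hx : x ∈ X) (hxW : x ∈ W) : X ⊆ W :=
  hW X hX ⟨x, hx, hxW⟩

lemma mem_aut {f : Equiv.Perm G} :
    f ∈ A.aut ↔ ∀ X ∈ A.basic, ∀ g h : G, h * g⁻¹ ∈ X ↔ f h * (f g)⁻¹ ∈ X :=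
  Iff.rfl

lemma aut_mem_iff_aset {f : Equiv.Perm G} (hf : f ∈ A.aut) {W : Set G} (hW : A.IsASet W)
    (g h : G) : h * g⁻¹ ∈ W ↔ f h * (f g)⁻¹ ∈ W := by
  constructor
  · intro hm
    obtain ⟨X, hX, hx⟩ := A.exists_basic_mem (h * g⁻¹)
    exact A.basic_subset_of_aset hW hX hx hm ((A.mem_aut.1 hf X hX g h).1 hx)
  · intro hm
    obtain ⟨X, hX, hx⟩ := A.exists_basic_mem (f h * (f g)⁻¹)
    have h2 : h * g⁻¹ ∈ X := (A.mem_aut.1 hf X hX g h).2 hx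
    exact A.basic_subset_of_aset hW hX hx hm h2

lemma rightMul_le_aut : rightMulGroup G ≤ A.aut := by
  rintro f ⟨a, ha⟩ X hX g h
  have : f h * (f g)⁻¹ = h * g⁻¹ := by
    rw [ha, ha, mul_inv_rev, ← mul_assoc, mul_assoc h a, mul_inv_cancel, mul_one]
  rw [this]

open scoped Pointwise in
lemma aset_mul [Finite G] {W1 W2 : Set G} (h1 : A.IsASet W1) (h2 : A.IsASet W2) :
    A.IsASet (W1 * W2) := by
  rintro Z hZ ⟨z, hzZ, hzm⟩ z' hz'
  rw [Set.mem_mul] at hzm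
  obtain ⟨a, ha, b, hb, hab⟩ := hzm
  obtain ⟨X, hX, haX⟩ := A.exists_basic_mem a
  obtain ⟨Y, hY, hbY⟩ := A.exists_basic_mem b
  have key := A.structConst X hX Y hY Z hZ z hzZ z' hz'
  have hne : ({p : G × G | p.1 ∈ X ∧ p.2 ∈ Y ∧ p.1 * p.2 = z'}).Nonempty := by
    have hx0 : ({p : G × G | p.1 ∈ X ∧ p.2 ∈ Y ∧ p.1 * p.2 = z}).Nonempty :=
      ⟨(a, b), haX, hbY, hab⟩
    apply Set.nonempty_of_ncard_ne_zero
    rw [← key]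
    exact ((Set.ncard_pos (Set.toFinite _)).2 hx0).ne'
  obtain ⟨⟨a', b'⟩, ha', hb', hab'⟩ := hne
  rw [← hab']
  exact Set.mul_mem_mul (h1 X hX ⟨a, haX, ha⟩ ha') (h2 Y hY ⟨b, hbY, hb⟩ hb')

lemma orb1_eq_basic_of_witness {Γ : Subgroup (Equiv.Perm G)}
    (hbasic : A.basic = {X : Set G | ∃ x : G, X = {y : G | ∃ γ ∈ Γ, γ 1 = 1 ∧ γ x = y}})
    {X : Set G} {x : G} (hX : X ∈ A.basic) (hx : x ∈ X) : orb1 Γ x = X := by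
  have hX' : X ∈ {X : Set G | ∃ x : G, X = {y : G | ∃ γ ∈ Γ, γ 1 = 1 ∧ γ x = y}} :=
    hbasic ▸ hX
  obtain ⟨x₀, rfl⟩ := hX'
  exact orb1_eq_of_mem hx

lemma witness_le_aut {Γ : Subgroup (Equiv.Perm G)} (hΓ : rightMulGroup G ≤ Γ)
    (hbasic : A.basic = {X : Set G | ∃ x : G, X = {y : G | ∃ γ ∈ Γ, γ 1 = 1 ∧ γ x = y}}) :
    ∀ γ ∈ Γ, γ ∈ A.aut := by
  intro γ hγ X hX g h
  have horb : ∀ w : G, w ∈ X → orb1 Γ w = X := fun w hw =>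
    A.orb1_eq_basic_of_witness hbasic hX hw
  constructor
  · intro hm
    exact (horb _ hm) ▸ orb1_shift hΓ hγ g h
  · intro hm
    have key := orb1_shift hΓ (Γ.inv_mem hγ) (γ g) (γ h)
    simp only [Equiv.Perm.inv_def, Equiv.symm_apply_apply] at key
    exact (horb _ hm) ▸ key

lemma aut_orb1_subset_basic {X : Set G} {x : G} (hX : X ∈ A.basic) (hx : x ∈ X) :
    orb1 A.aut x ⊆ X := by
  rintro y ⟨f, hf, h1, rfl⟩
  have := (A.mem_aut.1 hf X hX 1 x).1 (by simpa using hx)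
  simpa [h1] using this

lemma orb1_aut_eq_basic (hs : A.IsSchurian) {X : Set G} {x : G}
    (hX : X ∈ A.basic) (hx : x ∈ X) : orb1 A.aut x = X := by
  obtain ⟨Γ, hΓ, hbasic⟩ := hs
  refine subset_antisymm (A.aut_orb1_subset_basic hX hx) ?_
  rw [← A.orb1_eq_basic_of_witness hbasic hX hx]
  exact orb1_mono (A.witness_le_aut hΓ hbasic) x

lemma orb1_eq_basic_of_twoEquiv (hs : A.IsSchurian) {Δ : Subgroup (Equiv.Perm G)}
    (ht : TwoEquiv (Δ : Set (Equiv.Perm G)) (A.aut : Set (Equiv.Perm G)))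
    {X : Set G} {x : G} (hX : X ∈ A.basic) (hx : x ∈ X) : orb1 Δ x = X := by
  rw [twoEquiv_orb1 ht x, A.orb1_aut_eq_basic hs hX hx]

lemma basic_eq_orb1_sets {Γ : Subgroup (Equiv.Perm G)}
    (h : ∀ (X : Set G) (x : G), X ∈ A.basic → x ∈ X → orb1 Γ x = X) :
    A.basic = {X : Set G | ∃ x : G, X = {y : G | ∃ γ ∈ Γ, γ 1 = 1 ∧ γ x = y}} := by
  ext X
  constructor
  · intro hX
    have hne : X.Nonempty := by
      rcases Set.eq_empty_or_nonempty X with he | hne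
      · exact absurd (he ▸ hX) A.isPartition.1
      · exact hne
    obtain ⟨x, hx⟩ := hne
    exact ⟨x, (h X x hX hx).symm⟩
  · rintro ⟨x, rfl⟩
    obtain ⟨X, hX, hx⟩ := A.exists_basic_mem x
    rw [show {y : G | ∃ γ ∈ Γ, γ 1 = 1 ∧ γ x = y} = orb1 Γ x from rfl, h X x hX hx]
    exact hX

end SRing

end Aux2
section Aux3

variable {K : Type*} [Group K]

/-- Restriction of a permutation preserving a subgroup. -/
noncomputable def permRes (U : Subgroup K) [Finite U] (γ : Equiv.Perm K)
    (h : ∀ u : U, γ u ∈ U) : Equiv.Perm U :=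
  Equiv.ofBijective (fun u => ⟨γ u, h u⟩)
    (Finite.injective_iff_bijective.1 (fun a b hab =>
      Subtype.ext (γ.injective (congrArg Subtype.val hab))))

@[simp] lemma permRes_coe (U : Subgroup K) [Finite U] (γ : Equiv.Perm K)
    (h : ∀ u : U, γ u ∈ U) (u : U) : (permRes U γ h u : K) = γ u := rfl

/-- The permutation induced on `K ⧸ N` by a permutation preserving the coset relation. -/
noncomputable def permQuot (N : Subgroup K) [N.Normal] [Finite (K ⧸ N)] (γ : Equiv.Perm K)
    (h : ∀ x y : K, (QuotientGroup.mk x : K ⧸ N) = QuotientGroup.mk y ↔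
      (QuotientGroup.mk (γ x) : K ⧸ N) = QuotientGroup.mk (γ y)) : Equiv.Perm (K ⧸ N) :=
  Equiv.ofBijective
    (fun q => Quotient.liftOn' q (fun x => (QuotientGroup.mk (γ x) : K ⧸ N))
      (fun a b hab => (h a b).1 (Quotient.sound' hab)))
    (Finite.injective_iff_bijective.1 (by
      intro q q'
      induction q using Quotient.inductionOn'
      induction q' using Quotient.inductionOn'
      intro hh
      exact (h _ _).2 hh))

@[simp] lemma permQuot_mk (N : Subgroup K) [N.Normal] [Finite (K ⧸ N)] (γ : Equiv.Perm K)
    (h : ∀ x y : K, (QuotientGroup.mk x : K ⧸ N) = QuotientGroup.mk y ↔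
      (QuotientGroup.mk (γ x) : K ⧸ N) = QuotientGroup.mk (γ y)) (x : K) :
    permQuot N γ h (QuotientGroup.mk x) = QuotientGroup.mk (γ x) := rfl

end Aux3
section Forward

open QuotientGroup

variable {G : Type*} [CommGroup G] [Fintype G]

lemma mk_mem_image_iff (L : Subgroup G) (X : Set G) (w : G) :
    (QuotientGroup.mk w : G ⧸ L) ∈ QuotientGroup.mk '' X ↔ w ∈ (↑L : Set G) * X := by
  constructor
  · rintro ⟨x, hx, he⟩
    have hmem : x⁻¹ * w ∈ L := QuotientGroup.eq.1 he
    refine ⟨w * x⁻¹, ?_, x, hx, by show w * x⁻¹ * x = w; rw [inv_mul_cancel_right]⟩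
    rwa [mul_comm] at hmem
  · rintro ⟨l, hl, x, hx, rfl⟩
    refine ⟨x, hx, ?_⟩
    rw [QuotientGroup.eq]
    show x⁻¹ * (l * x) ∈ L
    rw [mul_comm l x, ← mul_assoc, inv_mul_cancel, one_mul]
    exact hl

lemma forward_dir (A : SRing G) (L U : Subgroup G) (hUL : A.ULcondition L U)
    (AU : SRing U) (hAU : AU.basic = A.resBasic U)
    (AGL : SRing (G ⧸ L)) (hAGL : AGL.basic = A.quotBasic L)
    (hs : A.IsSchurian) :
    AU.IsSchurian ∧ AGL.IsSchurian ∧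
        ∃ (ΔU : Subgroup (Equiv.Perm U)) (Δ0 : Subgroup (Equiv.Perm (G ⧸ L))),
          rightMulGroup U ≤ ΔU ∧ rightMulGroup (G ⧸ L) ≤ Δ0 ∧
          (∀ d ∈ ΔU, ∀ u v : U,
            (QuotientGroup.mk u : U ⧸ L.subgroupOf U) = QuotientGroup.mk v →
            (QuotientGroup.mk (d u) : U ⧸ L.subgroupOf U) = QuotientGroup.mk (d v)) ∧
          inducedQuot (↑ΔU : Set (Equiv.Perm U)) (L.subgroupOf U)
            = inducedSecOfQuot (↑Δ0 : Set (Equiv.Perm (G ⧸ L))) U ∧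
          TwoEquiv (↑ΔU : Set (Equiv.Perm U)) (↑AU.aut : Set (Equiv.Perm U)) ∧
          TwoEquiv (↑Δ0 : Set (Equiv.Perm (G ⧸ L))) (↑AGL.aut : Set (Equiv.Perm (G ⧸ L))) := by
  obtain ⟨Γ, hΓ, hbasic⟩ := hs
  obtain ⟨-, hLU, hLset, hUset, -⟩ := hUL
  have hle : ∀ γ ∈ Γ, γ ∈ A.aut := A.witness_le_aut hΓ hbasic
  have horb : ∀ (X : Set G) (x : G), X ∈ A.basic → x ∈ X → orb1 Γ x = X :=
    fun X x hX hx => A.orb1_eq_basic_of_witness hbasic hX hx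
  have hfix : ∀ γ ∈ Γ, γ 1 = 1 → ∀ W : Set G, A.IsASet W → ∀ w ∈ W, γ w ∈ W := by
    intro γ hγ h1 W hW w hw
    obtain ⟨X, hX, hwX⟩ := A.exists_basic_mem w
    have hm : γ w ∈ orb1 Γ w := ⟨γ, hγ, h1, rfl⟩
    rw [horb X w hX hwX] at hm
    exact A.basic_subset_of_aset hW hX hwX hw hm
  have hcosL : ∀ γ ∈ Γ, ∀ x y : G,
      ((QuotientGroup.mk x : G ⧸ L) = QuotientGroup.mk y ↔
        (QuotientGroup.mk (γ x) : G ⧸ L) = QuotientGroup.mk (γ y)) := by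
    intro γ hγ x y
    rw [QuotientGroup.eq, QuotientGroup.eq]
    have e1 : x⁻¹ * y ∈ L ↔ y * x⁻¹ ∈ (↑L : Set G) := by rw [mul_comm]; rfl
    have e2 : (γ x)⁻¹ * γ y ∈ L ↔ γ y * (γ x)⁻¹ ∈ (↑L : Set G) := by rw [mul_comm]; rfl
    rw [e1, e2]
    exact A.aut_mem_iff_aset (hle γ hγ) hLset x y
  -- the induced group on U
  set ΔU : Subgroup (Equiv.Perm U) :=
    { carrier := {δ | ∃ γ ∈ Γ, (∀ u : U, γ ↑u ∈ U) ∧ ∀ u : U, γ ↑u = ↑(δ u)},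
      one_mem' := ⟨1, Γ.one_mem, fun u => by simpa using u.2, fun u => by simp⟩,
      mul_mem' := by
        rintro δ δ' ⟨γ, hγ, hγU, hγδ⟩ ⟨γ', hγ', hγ'U, hγ'δ⟩
        refine ⟨γ * γ', Γ.mul_mem hγ hγ', fun u => ?_, fun u => ?_⟩
        · show γ (γ' ↑u) ∈ U
          rw [hγ'δ u]; exact hγU _
        · show γ (γ' ↑u) = _
          rw [hγ'δ u, hγδ (δ' u)]; rfl
      inv_mem' := by
        rintro δ ⟨γ, hγ, hγU, hγδ⟩
        have key : ∀ u : U, γ⁻¹ ↑u = ↑(δ⁻¹ u) := by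
          intro u
          have h2 : γ ↑(δ⁻¹ u) = ↑u := by rw [hγδ (δ⁻¹ u)]; simp
          rw [← h2]; simp
        exact ⟨γ⁻¹, Γ.inv_mem hγ, fun u => by rw [key u]; exact (δ⁻¹ u).2, key⟩ } with hΔUdef
  have hΔUmem : ∀ δ : Equiv.Perm U,
      δ ∈ ΔU ↔ ∃ γ ∈ Γ, (∀ u : U, γ ↑u ∈ U) ∧ ∀ u : U, γ ↑u = ↑(δ u) := fun δ => Iff.rfl
  -- the induced group on G⧸L
  set Δ0 : Subgroup (Equiv.Perm (G ⧸ L)) :=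
    { carrier := {σ | ∃ γ ∈ Γ, ∀ g : G, σ (QuotientGroup.mk g) = QuotientGroup.mk (γ g)},
      one_mem' := ⟨1, Γ.one_mem, fun g => rfl⟩,
      mul_mem' := by
        rintro σ σ' ⟨γ, hγ, hc⟩ ⟨γ', hγ', hc'⟩
        refine ⟨γ * γ', Γ.mul_mem hγ hγ', fun g => ?_⟩
        show σ (σ' _) = _
        rw [hc' g, hc (γ' g)]; rfl
      inv_mem' := by
        rintro σ ⟨γ, hγ, hc⟩
        refine ⟨γ⁻¹, Γ.inv_mem hγ, fun g => ?_⟩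
        have h2 := hc (γ⁻¹ g)
        rw [show γ (γ⁻¹ g) = g by simp] at h2
        rw [← h2]; simp } with hΔ0def
  have hΔ0mem : ∀ σ : Equiv.Perm (G ⧸ L),
      σ ∈ Δ0 ↔ ∃ γ ∈ Γ, ∀ g : G, σ (QuotientGroup.mk g) = QuotientGroup.mk (γ g) :=
    fun σ => Iff.rfl
  -- condition 1
  have cond1 : rightMulGroup U ≤ ΔU := by
    rintro δ ⟨u₀, hu₀⟩
    refine (hΔUmem δ).2 ⟨Equiv.mulRight ↑u₀, hΓ (mulRight_mem_rightMulGroup _),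
      fun u => ?_, fun u => ?_⟩
    · exact U.mul_mem u.2 u₀.2
    · show (u : G) * ↑u₀ = ↑(δ u)
      rw [hu₀ u]; rfl
  -- condition 2
  have cond2 : rightMulGroup (G ⧸ L) ≤ Δ0 := by
    rintro σ ⟨c, hc⟩
    obtain ⟨a, rfl⟩ := QuotientGroup.mk_surjective c
    refine (hΔ0mem σ).2 ⟨Equiv.mulRight a, hΓ (mulRight_mem_rightMulGroup _), fun g => ?_⟩
    rw [hc]; rfl
  -- ΔU is contained in Aut(AU)
  have hΔUaut : ∀ δ ∈ ΔU, δ ∈ AU.aut := by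
    intro δ hδ
    obtain ⟨γ, hγ, hγU, hγδ⟩ := (hΔUmem δ).1 hδ
    intro Xr hXr g h
    rw [hAU] at hXr
    obtain ⟨X, hX, hXU, rfl⟩ := hXr
    have base := A.mem_aut.1 (hle γ hγ) X hX ↑g ↑h
    simp only [Set.mem_preimage]
    rw [show ((h * g⁻¹ : U) : G) = (h : G) * (g : G)⁻¹ by push_cast; rfl,
      show ((δ h * (δ g)⁻¹ : U) : G) = ((δ h : G)) * ((δ g : G))⁻¹ by push_cast; rfl,
      ← hγδ h, ← hγδ g]
    exact base
  -- Δ0 is contained in Aut(AGL)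
  have hΔ0aut : ∀ σ ∈ Δ0, σ ∈ AGL.aut := by
    intro σ hσ
    obtain ⟨γ, hγ, hc⟩ := (hΔ0mem σ).1 hσ
    intro Y hY gq hq
    rw [hAGL] at hY
    obtain ⟨X₁, hX₁, rfl⟩ := hY
    obtain ⟨g, rfl⟩ := QuotientGroup.mk_surjective gq
    obtain ⟨h, rfl⟩ := QuotientGroup.mk_surjective hq
    have hLX : A.IsASet ((↑L : Set G) * X₁) := A.aset_mul hLset (A.isASet_basic hX₁)
    rw [hc g, hc h,
      show (QuotientGroup.mk h * (QuotientGroup.mk g)⁻¹ : G ⧸ L) = QuotientGroup.mk (h * g⁻¹)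
        from rfl,
      show (QuotientGroup.mk (γ h) * (QuotientGroup.mk (γ g))⁻¹ : G ⧸ L)
          = QuotientGroup.mk (γ h * (γ g)⁻¹) from rfl,
      mk_mem_image_iff, mk_mem_image_iff]
    exact A.aut_mem_iff_aset (hle γ hγ) hLX g h
  -- orbits of ΔU are the basic sets of AU
  have hAUorb : ∀ (Xr : Set U) (x : U), Xr ∈ AU.basic → x ∈ Xr → orb1 ΔU x = Xr := by
    intro Xr x hXr hx
    have hXr' := hAU ▸ hXr
    obtain ⟨X, hX, hXU, rfl⟩ := hXr'
    apply subset_antisymm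
    · rintro y ⟨δ, hδ, h1, rfl⟩
      obtain ⟨γ, hγ, hγU, hγδ⟩ := (hΔUmem δ).1 hδ
      have hγ1 : γ 1 = 1 := by
        have h2 := hγδ 1
        rw [h1] at h2
        simpa using h2
      have hm : γ ↑x ∈ X := hfix γ hγ hγ1 X (A.isASet_basic hX) ↑x hx
      rw [hγδ x] at hm
      exact hm
    · intro y hy
      have hym : (y : G) ∈ orb1 Γ ↑x := (horb X ↑x hX hx).symm ▸ hy
      obtain ⟨γ, hγ, h1, hxy⟩ := hym
      have hγU : ∀ u : U, γ ↑u ∈ U := fun u => hfix γ hγ h1 ↑U hUset ↑u u.2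
      refine ⟨permRes U γ hγU, (hΔUmem _).2 ⟨γ, hγ, hγU, fun u => rfl⟩, ?_, ?_⟩
      · apply Subtype.ext
        show γ ↑(1 : U) = ↑(1 : U)
        simpa using h1
      · apply Subtype.ext
        exact hxy
  have hAUs : AU.IsSchurian := ⟨ΔU, cond1, AU.basic_eq_orb1_sets hAUorb⟩
  -- orbits of Δ0 are the basic sets of AGL
  have hAGLorb : ∀ (Y : Set (G ⧸ L)) (xq : G ⧸ L), Y ∈ AGL.basic → xq ∈ Y →
      orb1 Δ0 xq = Y := by
    intro Y xq hY hx
    have hY' := hAGL ▸ hY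
    obtain ⟨X₁, hX₁, rfl⟩ := hY'
    apply subset_antisymm
    · rintro yq ⟨σ, hσ, h1, rfl⟩
      obtain ⟨γ, hγ, hc⟩ := (hΔ0mem σ).1 hσ
      have hγ1L : γ 1 ∈ L := by
        have h2 := hc 1
        rw [show (QuotientGroup.mk (1 : G) : G ⧸ L) = 1 from rfl, h1] at h2
        exact (QuotientGroup.eq_one_iff _).1 h2.symm
      set γ' : Equiv.Perm G := Equiv.mulRight (γ 1)⁻¹ * γ with hγ'def
      have hγ'Γ : γ' ∈ Γ := Γ.mul_mem (hΓ (mulRight_mem_rightMulGroup _)) hγ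
      have hγ'1 : γ' 1 = 1 := by simp [hγ'def]
      have hc' : ∀ g, σ (QuotientGroup.mk g) = QuotientGroup.mk (γ' g) := by
        intro g
        rw [hc g]
        show _ = QuotientGroup.mk (γ g * (γ 1)⁻¹)
        rw [QuotientGroup.eq]
        rw [← mul_assoc, inv_mul_cancel, one_mul]
        exact L.inv_mem hγ1L
      obtain ⟨x, rfl⟩ := QuotientGroup.mk_surjective xq
      obtain ⟨X₂, hX₂, hxX₂⟩ := A.exists_basic_mem x
      have hLX : A.IsASet ((↑L : Set G) * X₁) := A.aset_mul hLset (A.isASet_basic hX₁)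
      have hxLX : x ∈ (↑L : Set G) * X₁ := (mk_mem_image_iff L X₁ x).1 hx
      have hX₂sub : X₂ ⊆ (↑L : Set G) * X₁ := A.basic_subset_of_aset hLX hX₂ hxX₂ hxLX
      have hγ'x : γ' x ∈ (↑L : Set G) * X₁ :=
        hX₂sub (hfix γ' hγ'Γ hγ'1 X₂ (A.isASet_basic hX₂) x hxX₂)
      rw [hc' x]
      exact (mk_mem_image_iff L X₁ (γ' x)).2 hγ'x
    · intro yq hy
      obtain ⟨x, hxX₁, rfl⟩ := hx
      obtain ⟨y, hyX₁, rfl⟩ := hy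
      have hym : y ∈ orb1 Γ x := (horb X₁ x hX₁ hxX₁).symm ▸ hyX₁
      obtain ⟨γ, hγ, h1, hxy⟩ := hym
      refine ⟨permQuot L γ (hcosL γ hγ), (hΔ0mem _).2 ⟨γ, hγ, fun g => rfl⟩, ?_, ?_⟩
      · rw [show (1 : G ⧸ L) = QuotientGroup.mk (1 : G) from rfl, permQuot_mk, h1]
      · rw [permQuot_mk, hxy]
  have hAGLs : AGL.IsSchurian := ⟨Δ0, cond2, AGL.basic_eq_orb1_sets hAGLorb⟩
  -- condition 3
  have cond3 : ∀ d ∈ ΔU, ∀ u v : U,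
      (QuotientGroup.mk u : U ⧸ L.subgroupOf U) = QuotientGroup.mk v →
      (QuotientGroup.mk (d u) : U ⧸ L.subgroupOf U) = QuotientGroup.mk (d v) := by
    intro d hd u v huv
    obtain ⟨γ, hγ, hγU, hγδ⟩ := (hΔUmem d).1 hd
    rw [QuotientGroup.eq] at huv ⊢
    rw [Subgroup.mem_subgroupOf] at huv ⊢
    have h2 : (v : G) * (u : G)⁻¹ ∈ (↑L : Set G) := by
      have : ((u⁻¹ * v : U) : G) = (v : G) * (u : G)⁻¹ := by push_cast; exact mul_comm _ _
      rw [← this]; exact huv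
    have h3 := (A.aut_mem_iff_aset (hle γ hγ) hLset ↑u ↑v).1 h2
    rw [hγδ u, hγδ v] at h3
    have : (((d u)⁻¹ * d v : U) : G) = ((d v : U) : G) * ((d u : U) : G)⁻¹ := by
      push_cast; exact mul_comm _ _
    rw [this]
    exact h3
  -- condition 4
  have cond4 : inducedQuot (↑ΔU : Set (Equiv.Perm U)) (L.subgroupOf U)
      = inducedSecOfQuot (↑Δ0 : Set (Equiv.Perm (G ⧸ L))) U := by
    ext σ
    constructor
    · rintro ⟨δ, hδ, hcomp⟩
      obtain ⟨γ, hγ, hγU, hγδ⟩ := (hΔUmem δ).1 (SetLike.mem_coe.1 hδ)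
      refine ⟨permQuot L γ (hcosL γ hγ), SetLike.mem_coe.2 ((hΔ0mem _).2 ⟨γ, hγ, fun g => rfl⟩),
        fun u => ⟨δ u, by rw [permQuot_mk, hγδ u]⟩, ?_⟩
      intro u v hv
      rw [permQuot_mk, hγδ u] at hv
      rw [hcomp u, QuotientGroup.eq, Subgroup.mem_subgroupOf]
      have := QuotientGroup.eq.1 hv
      exact_mod_cast this
    · rintro ⟨δ0, hδ0, hex, hcompat⟩
      obtain ⟨γ, hγ, hc⟩ := (hΔ0mem δ0).1 (SetLike.mem_coe.1 hδ0)
      have hγU : ∀ u : U, γ ↑u ∈ U := by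
        intro u
        obtain ⟨v, hv⟩ := hex u
        rw [hc] at hv
        have h2 : (γ ↑u)⁻¹ * ↑v ∈ L := QuotientGroup.eq.1 hv
        have h3 : γ ↑u = ↑v * ((γ ↑u)⁻¹ * ↑v)⁻¹ := by group
        rw [h3]
        exact U.mul_mem v.2 (U.inv_mem (hLU h2))
      refine ⟨permRes U γ hγU, SetLike.mem_coe.2 ((hΔUmem _).2 ⟨γ, hγ, hγU, fun u => rfl⟩),
        fun u => ?_⟩
      exact hcompat u (permRes U γ hγU u) (by rw [hc]; rfl)
  -- condition 5
  have cond5 : TwoEquiv (↑ΔU : Set (Equiv.Perm U)) (↑AU.aut : Set (Equiv.Perm U)) := by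
    apply twoEquiv_of_orb1_eq cond1 AU.rightMul_le_aut
    intro x
    obtain ⟨Xr, hXr, hx⟩ := AU.exists_basic_mem x
    rw [hAUorb Xr x hXr hx, AU.orb1_aut_eq_basic hAUs hXr hx]
  -- condition 6
  have cond6 : TwoEquiv (↑Δ0 : Set (Equiv.Perm (G ⧸ L)))
      (↑AGL.aut : Set (Equiv.Perm (G ⧸ L))) := by
    apply twoEquiv_of_orb1_eq cond2 AGL.rightMul_le_aut
    intro x
    obtain ⟨Y, hY, hx⟩ := AGL.exists_basic_mem x
    rw [hAGLorb Y x hY hx, AGL.orb1_aut_eq_basic hAGLs hY hx]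
  exact ⟨hAUs, hAGLs, ΔU, Δ0, cond1, cond2, cond3, cond4, cond5, cond6⟩

end Forward
section Gwr

open QuotientGroup

variable {G : Type*} [CommGroup G] [Fintype G]

/-- The generalized wreath product of `ΔU` and `Δ0`, as a permutation group on `G`. -/
def gwr (L U : Subgroup G) (ΔU : Subgroup (Equiv.Perm U)) (Δ0 : Subgroup (Equiv.Perm (G ⧸ L)))
    (h1 : rightMulGroup U ≤ ΔU) : Subgroup (Equiv.Perm G) where
  carrier := {γ | (∃ δ0 ∈ Δ0, ∀ g : G,
      (QuotientGroup.mk (γ g) : G ⧸ L) = δ0 (QuotientGroup.mk g)) ∧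
    ∀ g : G, ∃ δ ∈ ΔU, ∀ u : U, γ (g * ↑u) = γ g * ↑(δ u) * (↑(δ 1))⁻¹}
  one_mem' := ⟨⟨1, Δ0.one_mem, fun _ => rfl⟩, fun g => ⟨1, ΔU.one_mem, fun u => by simp⟩⟩
  mul_mem' := by
    rintro γ γ' ⟨⟨δ0, hδ0, hq⟩, hb⟩ ⟨⟨δ0', hδ0', hq'⟩, hb'⟩
    constructor
    · refine ⟨δ0 * δ0', Δ0.mul_mem hδ0 hδ0', fun g => ?_⟩
      show (QuotientGroup.mk (γ (γ' g)) : G ⧸ L) = δ0 (δ0' _)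
      rw [hq (γ' g), hq' g]
    · intro g
      obtain ⟨δ', hδ', hf'⟩ := hb' g
      obtain ⟨δ, hδ, hf⟩ := hb (γ' g)
      refine ⟨δ * Equiv.mulRight (δ' 1)⁻¹ * δ',
        ΔU.mul_mem (ΔU.mul_mem hδ (h1 (mulRight_mem_rightMulGroup _))) hδ', fun u => ?_⟩
      have e1 : γ' (g * ↑u) = γ' g * ↑(δ' u * (δ' 1)⁻¹) := by
        rw [hf' u]; push_cast; rw [mul_assoc]
      show γ (γ' (g * ↑u)) = γ (γ' g) * _ * _
      rw [e1, hf (δ' u * (δ' 1)⁻¹)]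
      simp [Equiv.Perm.mul_apply]
  inv_mem' := by
    rintro γ ⟨⟨δ0, hδ0, hq⟩, hb⟩
    constructor
    · refine ⟨δ0⁻¹, Δ0.inv_mem hδ0, fun g => ?_⟩
      have h2 := hq (γ⁻¹ g)
      rw [show γ (γ⁻¹ g) = g by simp] at h2
      rw [h2]; simp
    · intro g
      obtain ⟨δ, hδ, hf⟩ := hb (γ⁻¹ g)
      refine ⟨δ⁻¹ * Equiv.mulRight (δ 1),
        ΔU.mul_mem (ΔU.inv_mem hδ) (h1 (mulRight_mem_rightMulGroup _)), fun u => ?_⟩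
      have h1' : (δ⁻¹ * Equiv.mulRight (δ 1)) 1 = 1 := by
        simp [Equiv.Perm.mul_apply]
      have key : γ (γ⁻¹ g * ↑(δ⁻¹ (u * δ 1))) = g * ↑u := by
        rw [hf (δ⁻¹ (u * δ 1)), show δ (δ⁻¹ (u * δ 1)) = u * δ 1 by simp,
          show γ (γ⁻¹ g) = g by simp]
        push_cast
        rw [← mul_assoc g, mul_inv_cancel_right]
      calc γ⁻¹ (g * ↑u) = γ⁻¹ (γ (γ⁻¹ g * ↑(δ⁻¹ (u * δ 1)))) := by rw [key]
        _ = γ⁻¹ g * ↑(δ⁻¹ (u * δ 1)) := by simp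
        _ = γ⁻¹ g * ↑((δ⁻¹ * Equiv.mulRight (δ 1)) u)
              * (↑((δ⁻¹ * Equiv.mulRight (δ 1)) 1))⁻¹ := by
            rw [h1']
            simp [Equiv.Perm.mul_apply]

lemma mem_gwr {L U : Subgroup G} {ΔU : Subgroup (Equiv.Perm U)}
    {Δ0 : Subgroup (Equiv.Perm (G ⧸ L))} {h1 : rightMulGroup U ≤ ΔU} {γ : Equiv.Perm G} :
    γ ∈ gwr L U ΔU Δ0 h1 ↔
      (∃ δ0 ∈ Δ0, ∀ g : G, (QuotientGroup.mk (γ g) : G ⧸ L) = δ0 (QuotientGroup.mk g)) ∧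
      ∀ g : G, ∃ δ ∈ ΔU, ∀ u : U, γ (g * ↑u) = γ g * ↑(δ u) * (↑(δ 1))⁻¹ :=
  Iff.rfl

lemma rightMul_le_gwr {L U : Subgroup G} {ΔU : Subgroup (Equiv.Perm U)}
    {Δ0 : Subgroup (Equiv.Perm (G ⧸ L))} (h1 : rightMulGroup U ≤ ΔU)
    (h2 : rightMulGroup (G ⧸ L) ≤ Δ0) : rightMulGroup G ≤ gwr L U ΔU Δ0 h1 := by
  rintro γ ⟨a, ha⟩
  constructor
  · refine ⟨Equiv.mulRight (QuotientGroup.mk a), h2 (mulRight_mem_rightMulGroup _), fun g => ?_⟩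
    rw [ha g]; rfl
  · intro g
    refine ⟨1, ΔU.one_mem, fun u => ?_⟩
    rw [ha, ha]
    simp only [Equiv.Perm.one_apply, OneMemClass.coe_one, inv_one, mul_one]
    exact mul_right_comm g ↑u a

end Gwr
section Backward

open QuotientGroup

variable {G : Type*} [CommGroup G] [Fintype G]


lemma mkU_mul_coe (U : Subgroup G) (g : G) (u : U) :
    (QuotientGroup.mk (g * ↑u) : G ⧸ U) = QuotientGroup.mk g := by
  rw [QuotientGroup.eq]
  have e : (g * ↑u)⁻¹ * g = (↑u : G)⁻¹ := by group
  rw [e]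
  exact U.inv_mem u.2

/-- The `U`-part of `g` relative to the transversal given by `Quotient.out`. -/
noncomputable def secPart (U : Subgroup G) (g : G) : U :=
  ⟨((QuotientGroup.mk g : G ⧸ U)).out⁻¹ * g, by
    rw [← QuotientGroup.eq]
    exact QuotientGroup.out_eq' _⟩

lemma coe_secPart (U : Subgroup G) (g : G) :
    (secPart U g : G) = ((QuotientGroup.mk g : G ⧸ U)).out⁻¹ * g := rfl

lemma out_mul_secPart (U : Subgroup G) (g : G) :
    ((QuotientGroup.mk g : G ⧸ U)).out * ↑(secPart U g) = g :=
  mul_inv_cancel_left _ g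

lemma secPart_mul (U : Subgroup G) (g : G) (u : U) :
    secPart U (g * ↑u) = secPart U g * u := by
  apply Subtype.ext
  show ((QuotientGroup.mk (g * ↑u) : G ⧸ U)).out⁻¹ * (g * ↑u)
    = ((QuotientGroup.mk g : G ⧸ U)).out⁻¹ * g * ↑u
  rw [mkU_mul_coe U g u, mul_assoc]

lemma backward_dir (A : SRing G) (L U : Subgroup G) (hUL : A.ULcondition L U)
    (AU : SRing U) (hAU : AU.basic = A.resBasic U)
    (AGL : SRing (G ⧸ L)) (hAGL : AGL.basic = A.quotBasic L)
    (hAUs : AU.IsSchurian) (hAGLs : AGL.IsSchurian)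
    (ΔU : Subgroup (Equiv.Perm U)) (Δ0 : Subgroup (Equiv.Perm (G ⧸ L)))
    (h1 : rightMulGroup U ≤ ΔU) (h2 : rightMulGroup (G ⧸ L) ≤ Δ0)
    (h3 : ∀ d ∈ ΔU, ∀ u v : U,
      (QuotientGroup.mk u : U ⧸ L.subgroupOf U) = QuotientGroup.mk v →
      (QuotientGroup.mk (d u) : U ⧸ L.subgroupOf U) = QuotientGroup.mk (d v))
    (h4 : inducedQuot (↑ΔU : Set (Equiv.Perm U)) (L.subgroupOf U)
      = inducedSecOfQuot (↑Δ0 : Set (Equiv.Perm (G ⧸ L))) U)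
    (h5 : TwoEquiv (↑ΔU : Set (Equiv.Perm U)) (↑AU.aut : Set (Equiv.Perm U)))
    (h6 : TwoEquiv (↑Δ0 : Set (Equiv.Perm (G ⧸ L))) (↑AGL.aut : Set (Equiv.Perm (G ⧸ L)))) :
    A.IsSchurian := by
  classical
  obtain ⟨-, hLU, hLset, hUset, hsat⟩ := hUL
  -- orbits of ΔU and Δ0 recover the basic sets
  have hDUorb : ∀ (Xr : Set U) (x : U), Xr ∈ AU.basic → x ∈ Xr → orb1 ΔU x = Xr :=
    fun Xr x hXr hx => AU.orb1_eq_basic_of_twoEquiv hAUs h5 hXr hx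
  have hD0orb : ∀ (Y : Set (G ⧸ L)) (xq : G ⧸ L), Y ∈ AGL.basic → xq ∈ Y →
      orb1 Δ0 xq = Y :=
    fun Y xq hY hx => AGL.orb1_eq_basic_of_twoEquiv hAGLs h6 hY hx
  -- membership transfer
  have hmemU : ∀ w v : G, v ∈ U →
      (QuotientGroup.mk w : G ⧸ L) = QuotientGroup.mk v → w ∈ U := by
    intro w v hv he
    have hm := QuotientGroup.eq.1 he
    have hw : w = v * (w⁻¹ * v)⁻¹ := by group
    rw [hw]
    exact U.mul_mem hv (U.inv_mem (hLU hm))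
  -- the image of U in G/L is an AGL-set
  set US : Set (G ⧸ L) := QuotientGroup.mk '' (U : Set G) with hUSdef
  have hUSaset : AGL.IsASet US := by
    rintro Y hY ⟨yq, hy1, hy2⟩
    rw [hAGL] at hY
    obtain ⟨X, hX, rfl⟩ := hY
    obtain ⟨x, hxX, rfl⟩ := hy1
    obtain ⟨v, hvU, hvx⟩ := hy2
    have hxU : x ∈ U := hmemU x v hvU hvx.symm
    have hXU : X ⊆ ↑U := A.basic_subset_of_aset hUset hX hxX hxU
    rintro - ⟨x', hx', rfl⟩
    exact ⟨x', hXU hx', rfl⟩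
  -- elements of Δ0 preserve U-cosets in G/L
  have hcosU : ∀ δ0 ∈ Δ0, ∀ x y : G ⧸ L, y * x⁻¹ ∈ US → δ0 y * (δ0 x)⁻¹ ∈ US := by
    intro δ0 hδ0 x y hm
    have key := h6 (x, y)
    have hmem : (δ0 x, δ0 y) ∈
        {q : (G ⧸ L) × (G ⧸ L) | ∃ δ ∈ (↑Δ0 : Set (Equiv.Perm (G ⧸ L))), q = (δ x, δ y)} :=
      ⟨δ0, SetLike.mem_coe.2 hδ0, rfl⟩
    rw [key] at hmem
    obtain ⟨f, hf, heq⟩ := hmem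
    obtain ⟨e1, e2⟩ := Prod.mk.injEq .. ▸ heq
    rw [e1, e2]
    exact (AGL.aut_mem_iff_aset (SetLike.mem_coe.1 hf) hUSaset x y).1 hm
  -- coset equality transfer between U/L' and G/L
  have hcoeq : ∀ u v : U,
      (QuotientGroup.mk u : U ⧸ L.subgroupOf U) = QuotientGroup.mk v ↔
      (QuotientGroup.mk (↑u) : G ⧸ L) = QuotientGroup.mk (↑v) := by
    intro u v
    rw [QuotientGroup.eq, QuotientGroup.eq, Subgroup.mem_subgroupOf]
    constructor <;> intro h <;> exact_mod_cast h
  -- Lemma C : lifting elements of Δ0 to local ΔU-data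
  have hC : ∀ δ0 ∈ Δ0, ∀ a b : G, (QuotientGroup.mk b : G ⧸ L) = δ0 (QuotientGroup.mk a) →
      ∃ δ ∈ ΔU, ∀ u : U,
        (QuotientGroup.mk (b * ↑(δ u)) : G ⧸ L) = δ0 (QuotientGroup.mk (a * ↑u)) := by
    intro δ0 hδ0 a b hb
    set δ0' : Equiv.Perm (G ⧸ L) :=
      Equiv.mulRight (QuotientGroup.mk b)⁻¹ * δ0 * Equiv.mulRight (QuotientGroup.mk a)
      with hδ0'def
    have hδ0'mem : δ0' ∈ Δ0 :=
      Δ0.mul_mem (Δ0.mul_mem (h2 (mulRight_mem_rightMulGroup _)) hδ0)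
        (h2 (mulRight_mem_rightMulGroup _))
    have hδ0'apply : ∀ x : G ⧸ L,
        δ0' x = δ0 (x * QuotientGroup.mk a) * (QuotientGroup.mk b)⁻¹ := fun x => rfl
    have hδ0'U : ∀ u : U, ∃ v : U,
        δ0' (QuotientGroup.mk (↑u : G)) = QuotientGroup.mk (↑v : G) := by
      intro u
      have hm : (QuotientGroup.mk (↑u : G) * QuotientGroup.mk a : G ⧸ L)
          * (QuotientGroup.mk a)⁻¹ ∈ US := by
        rw [mul_inv_cancel_right]
        exact ⟨↑u, u.2, rfl⟩
      have hUS := hcosU δ0 hδ0 (QuotientGroup.mk a)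
        (QuotientGroup.mk (↑u : G) * QuotientGroup.mk a) hm
      rw [← hb] at hUS
      rw [hδ0'apply]
      obtain ⟨v, hvU, hv⟩ := hUS
      exact ⟨⟨v, hvU⟩, hv.symm⟩
    choose vf hvf using hδ0'U
    have hwd : ∀ u u' : U,
        (QuotientGroup.mk u : U ⧸ L.subgroupOf U) = QuotientGroup.mk u' →
        (QuotientGroup.mk (vf u) : U ⧸ L.subgroupOf U) = QuotientGroup.mk (vf u') := by
      intro u u' he
      rw [hcoeq] at he ⊢
      rw [← hvf u, ← hvf u', he]
    have hinj : Function.Injective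
        (fun q : U ⧸ L.subgroupOf U => Quotient.liftOn' q
          (fun u => (QuotientGroup.mk (vf u) : U ⧸ L.subgroupOf U))
          (fun a b hab => hwd a b (Quotient.sound' hab))) := by
      intro q q'
      induction q using Quotient.inductionOn'
      induction q' using Quotient.inductionOn'
      intro hh
      rename_i u u'
      have hh' : (QuotientGroup.mk (vf u) : U ⧸ L.subgroupOf U) = QuotientGroup.mk (vf u') := hh
      rw [hcoeq] at hh'
      rw [← hvf u, ← hvf u'] at hh'
      have := δ0'.injective hh'
      exact (hcoeq u u').2 this
    set σ : Equiv.Perm (U ⧸ L.subgroupOf U) :=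
      Equiv.ofBijective _ (Finite.injective_iff_bijective.1 hinj) with hσdef
    have hσmk : ∀ u : U, σ (QuotientGroup.mk u) = QuotientGroup.mk (vf u) := fun u => rfl
    have hσsec : σ ∈ inducedSecOfQuot (↑Δ0 : Set (Equiv.Perm (G ⧸ L))) U := by
      refine ⟨δ0', SetLike.mem_coe.2 hδ0'mem, fun u => ⟨vf u, hvf u⟩, ?_⟩
      intro u v hv
      rw [hσmk, hcoeq, ← hvf u, hv]
    rw [← h4] at hσsec
    obtain ⟨δ, hδ, hcomp⟩ := hσsec
    refine ⟨δ, SetLike.mem_coe.1 hδ, fun u => ?_⟩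
    have e1 : (QuotientGroup.mk (↑(δ u) : G) : G ⧸ L) = δ0' (QuotientGroup.mk (↑u : G)) := by
      have e2 := hcomp u
      rw [hσmk] at e2
      rw [hvf u]
      exact ((hcoeq (vf u) (δ u)).1 e2).symm
    calc (QuotientGroup.mk (b * ↑(δ u)) : G ⧸ L)
        = QuotientGroup.mk b * QuotientGroup.mk (↑(δ u) : G) := rfl
      _ = QuotientGroup.mk b *
          (δ0 (QuotientGroup.mk (↑u : G) * QuotientGroup.mk a) * (QuotientGroup.mk b)⁻¹) := by
          rw [e1, hδ0'apply]
      _ = δ0 (QuotientGroup.mk (a * ↑u)) := by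
          rw [mul_comm (QuotientGroup.mk b), inv_mul_cancel_right]
          congr 1
          rw [mul_comm]
          rfl

  -- Lemma D : extension of compatible pairs to elements of the wreath product
  have hD : ∀ δ0 ∈ Δ0, ∀ δs ∈ ΔU,
      (∀ u : U, (QuotientGroup.mk (↑(δs u) : G) : G ⧸ L) = δ0 (QuotientGroup.mk (↑u : G))) →
      ∃ γ ∈ gwr L U ΔU Δ0 h1,
        (∀ g : G, (QuotientGroup.mk (γ g) : G ⧸ L) = δ0 (QuotientGroup.mk g)) ∧
        ∀ u : U, γ ↑u = ↑(δs u) := by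
    intro δ0 hδ0 δs hδs hcomp
    have houtU : ((1 : G ⧸ U)).out ∈ U := by
      have := QuotientGroup.out_eq' (1 : G ⧸ U)
      exact (QuotientGroup.eq_one_iff _).1 this
    set w₀ : U := ⟨((1 : G ⧸ U)).out, houtU⟩ with hw₀def
    have hex : ∀ q : G ⧸ U, ∃ (b : G) (dq : Equiv.Perm U), dq ∈ ΔU ∧
        (∀ u : U, (QuotientGroup.mk (b * ↑(dq u)) : G ⧸ L)
          = δ0 (QuotientGroup.mk (q.out * ↑u))) ∧
        (q = 1 → b = 1 ∧ dq = δs * Equiv.mulRight w₀) := by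
      intro q
      by_cases hq : q = 1
      · subst hq
        refine ⟨1, δs * Equiv.mulRight w₀,
          ΔU.mul_mem hδs (h1 (mulRight_mem_rightMulGroup _)), fun u => ?_, fun _ => ⟨rfl, rfl⟩⟩
        show (QuotientGroup.mk (1 * ↑(δs (u * w₀))) : G ⧸ L) = _
        rw [one_mul, hcomp (u * w₀)]
        congr 1
        have e : ((u * w₀ : U) : G) = ↑w₀ * ↑u := by push_cast; exact mul_comm _ _
        show QuotientGroup.mk ((u * w₀ : U) : G) = QuotientGroup.mk (((1 : G ⧸ U)).out * ↑u)
        rw [e]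
      · obtain ⟨δ, hδ, hspec⟩ := hC δ0 hδ0 q.out ((δ0 (QuotientGroup.mk q.out)).out)
          (QuotientGroup.out_eq' _)
        exact ⟨_, δ, hδ, hspec, fun h => absurd h hq⟩
    choose bq dq hdqΔ hspec hpin using hex
    have hmkval : ∀ g : G,
        (QuotientGroup.mk (bq (QuotientGroup.mk g)
          * ↑(dq (QuotientGroup.mk g) (secPart U g))) : G ⧸ L) = δ0 (QuotientGroup.mk g) := by
      intro g
      have e0 := hspec (QuotientGroup.mk g) (secPart U g)
      rwa [out_mul_secPart U g] at e0
    have hinj : Function.Injective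
        (fun g : G => bq (QuotientGroup.mk g) * ↑(dq (QuotientGroup.mk g) (secPart U g))) := by
      intro g g' he
      simp only at he
      have hqL : (QuotientGroup.mk g : G ⧸ L) = QuotientGroup.mk g' :=
        δ0.injective (by rw [← hmkval g, ← hmkval g', he])
      have hqU : (QuotientGroup.mk g : G ⧸ U) = QuotientGroup.mk g' := by
        rw [QuotientGroup.eq] at hqL ⊢
        exact hLU hqL
      rw [← hqU] at he
      have e1 : (↑(dq (QuotientGroup.mk g) (secPart U g)) : G)
          = ↑(dq (QuotientGroup.mk g) (secPart U g')) := mul_left_cancel he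
      have e2 : secPart U g = secPart U g' :=
        (dq (QuotientGroup.mk g)).injective (Subtype.coe_injective e1)
      calc g = ((QuotientGroup.mk g : G ⧸ U)).out * ↑(secPart U g) :=
            (out_mul_secPart U g).symm
        _ = ((QuotientGroup.mk g' : G ⧸ U)).out * ↑(secPart U g') := by rw [hqU, e2]
        _ = g' := out_mul_secPart U g'
    set γ : Equiv.Perm G := Equiv.ofBijective _ (Finite.injective_iff_bijective.1 hinj)
      with hγdef
    have hγapp : ∀ g : G, γ g = bq (QuotientGroup.mk g)
        * ↑(dq (QuotientGroup.mk g) (secPart U g)) := fun g => rfl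
    have hγq : ∀ g : G, (QuotientGroup.mk (γ g) : G ⧸ L) = δ0 (QuotientGroup.mk g) := by
      intro g
      rw [hγapp g]
      exact hmkval g
    have hγfix : ∀ u : U, γ ↑u = ↑(δs u) := by
      intro u
      have h1q : (QuotientGroup.mk (↑u : G) : G ⧸ U) = 1 := (QuotientGroup.eq_one_iff _).2 u.2
      have hsp : secPart U (↑u : G) = w₀⁻¹ * u := by
        apply Subtype.ext
        show ((QuotientGroup.mk (↑u : G) : G ⧸ U)).out⁻¹ * ↑u = _
        rw [h1q]
        push_cast
        rfl
      rw [hγapp, h1q]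
      obtain ⟨hb1, hδ1⟩ := hpin 1 rfl
      rw [hb1, hδ1, hsp, one_mul]
      congr 1
      show δs (w₀⁻¹ * u * w₀) = δs u
      congr 1
      rw [mul_comm w₀⁻¹ u]
      exact inv_mul_cancel_right u w₀
    have hγmem : γ ∈ gwr L U ΔU Δ0 h1 := by
      rw [mem_gwr]
      refine ⟨⟨δ0, hδ0, hγq⟩, fun g => ?_⟩
      refine ⟨dq (QuotientGroup.mk g) * Equiv.mulRight (secPart U g),
        ΔU.mul_mem (hdqΔ _) (h1 (mulRight_mem_rightMulGroup _)), fun u => ?_⟩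
      simp only [Equiv.Perm.mul_apply, Equiv.coe_mulRight]
      rw [hγapp (g * ↑u), hγapp g, mkU_mul_coe U g u, secPart_mul U g u, one_mul,
        mul_comm u (secPart U g),
        mul_right_comm (bq (QuotientGroup.mk g))
          (↑(dq (QuotientGroup.mk g) (secPart U g)) : G), mul_inv_cancel_right]
    exact ⟨γ, hγmem, hγq, hγfix⟩

  -- matching δ0 for any δ in ΔU
  have hδ0ofδ : ∀ δ ∈ ΔU, ∃ δ0 ∈ Δ0,
      ∀ u : U, (QuotientGroup.mk (↑(δ u) : G) : G ⧸ L) = δ0 (QuotientGroup.mk (↑u : G)) := by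
    intro δ hδ
    have hiff : ∀ u v : U,
        (QuotientGroup.mk u : U ⧸ L.subgroupOf U) = QuotientGroup.mk v ↔
        (QuotientGroup.mk (δ u) : U ⧸ L.subgroupOf U) = QuotientGroup.mk (δ v) := by
      intro u v
      constructor
      · exact h3 δ hδ u v
      · intro h
        have := h3 δ⁻¹ (ΔU.inv_mem hδ) (δ u) (δ v) h
        simpa using this
    have hσ : permQuot (L.subgroupOf U) δ hiff
        ∈ inducedQuot (↑ΔU : Set (Equiv.Perm U)) (L.subgroupOf U) :=
      ⟨δ, SetLike.mem_coe.2 hδ, fun u => rfl⟩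
    rw [h4] at hσ
    obtain ⟨δ0, hδ0, hexv, hcompat⟩ := hσ
    refine ⟨δ0, SetLike.mem_coe.1 hδ0, fun u => ?_⟩
    obtain ⟨v, hv⟩ := hexv u
    have e1 := hcompat u v hv
    rw [permQuot_mk] at e1
    rw [hv]
    exact (hcoeq (δ u) v).1 e1
  set Γ := gwr L U ΔU Δ0 h1 with hΓdef
  have hΓr : rightMulGroup G ≤ Γ := rightMul_le_gwr h1 h2
  -- the orbits of the stabilizer of 1 in Γ are the basic sets of A
  have horbA : ∀ (X : Set G) (x : G), X ∈ A.basic → x ∈ X → orb1 Γ x = X := by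
    intro X x hX hx
    by_cases hxU : x ∈ U
    · -- the basic set lies inside U
      have hXU : X ⊆ ↑U := A.basic_subset_of_aset hUset hX hx hxU
      have hXb : ((((↑) : U → G)) ⁻¹' X) ∈ AU.basic := by
        rw [hAU]; exact ⟨X, hX, hXU, rfl⟩
      set xu : U := ⟨x, hxU⟩ with hxudef
      have hxu : xu ∈ ((((↑) : U → G)) ⁻¹' X) := hx
      apply subset_antisymm
      · rintro y ⟨γ, hγ, hγ1, rfl⟩
        obtain ⟨-, hb⟩ := (mem_gwr).1 (hΓdef ▸ hγ)
        obtain ⟨δ, hδ, hf⟩ := hb 1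
        set δt : Equiv.Perm U := Equiv.mulRight (δ 1)⁻¹ * δ with hδtdef
        have hres : ∀ u : U, γ ↑u = ↑(δt u) := by
          intro u
          have e := hf u
          rw [one_mul, hγ1, one_mul] at e
          rw [e, hδtdef]
          simp only [Equiv.Perm.mul_apply, Equiv.coe_mulRight]
          push_cast
          rfl
        have hδt : δt ∈ ΔU := ΔU.mul_mem (h1 (mulRight_mem_rightMulGroup _)) hδ
        have hδt1 : δt 1 = 1 := by
          rw [hδtdef]
          simp [Equiv.Perm.mul_apply]
        have hmem : δt xu ∈ ((((↑) : U → G)) ⁻¹' X) := by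
          rw [← hDUorb _ xu hXb hxu]
          exact ⟨δt, hδt, hδt1, rfl⟩
        have e2 : γ x = ↑(δt xu) := hres xu
        rw [e2]
        exact hmem
      · intro y hy
        have hyU : y ∈ U := hXU hy
        set yu : U := ⟨y, hyU⟩ with hyudef
        have hyu : yu ∈ ((((↑) : U → G)) ⁻¹' X) := hy
        have hmem : yu ∈ orb1 ΔU xu := by
          rw [hDUorb _ xu hXb hxu]; exact hyu
        obtain ⟨δ, hδ, hδ1, hδx⟩ := hmem
        obtain ⟨δ0, hδ0, hc⟩ := hδ0ofδ δ hδ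
        obtain ⟨γ, hγmem, hγq, hγfix⟩ := hD δ0 hδ0 δ hδ hc
        refine ⟨γ, hΓdef ▸ hγmem, ?_, ?_⟩
        · have e := hγfix 1
          rw [hδ1] at e
          simpa using e
        · have e := hγfix xu
          rw [hδx] at e
          exact e
    · -- the basic set lies outside U
      have hXc : X ⊆ (↑U : Set G)ᶜ := by
        intro w hw
        simp only [Set.mem_compl_iff]
        intro hwU
        exact hxU (A.basic_subset_of_aset hUset hX hw hwU hx)
      have hsatX := (hsat X hX hXc).1
      have hYb : (QuotientGroup.mk '' X : Set (G ⧸ L)) ∈ AGL.basic := by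
        rw [hAGL]; exact ⟨X, hX, rfl⟩
      have hxq : (QuotientGroup.mk x : G ⧸ L) ∈ QuotientGroup.mk '' X := ⟨x, hx, rfl⟩
      apply subset_antisymm
      · rintro y ⟨γ, hγ, hγ1, rfl⟩
        obtain ⟨⟨δ0, hδ0, hq⟩, -⟩ := (mem_gwr).1 (hΓdef ▸ hγ)
        have h01 : δ0 1 = 1 := by
          have e := hq 1
          rw [hγ1] at e
          exact e.symm
        have hmem : δ0 (QuotientGroup.mk x) ∈ QuotientGroup.mk '' X := by
          rw [← hD0orb _ (QuotientGroup.mk x) hYb hxq]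
          exact ⟨δ0, hδ0, h01, rfl⟩
        rw [← hq x] at hmem
        have e := (mk_mem_image_iff L X (γ x)).1 hmem
        rwa [hsatX] at e
      · intro y hy
        have hyq : (QuotientGroup.mk y : G ⧸ L) ∈ orb1 Δ0 (QuotientGroup.mk x) := by
          rw [hD0orb _ (QuotientGroup.mk x) hYb hxq]
          exact ⟨y, hy, rfl⟩
        obtain ⟨δ0, hδ0, h01, heq⟩ := hyq
        obtain ⟨δ, hδ, hspec1⟩ := hC δ0 hδ0 1 1
          (by rw [show (QuotientGroup.mk (1 : G) : G ⧸ L) = 1 from rfl, h01])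
        have hcomp' : ∀ u : U,
            (QuotientGroup.mk (↑(δ u) : G) : G ⧸ L) = δ0 (QuotientGroup.mk (↑u : G)) := by
          intro u
          have e := hspec1 u
          rwa [one_mul, one_mul] at e
        obtain ⟨γ, hγmem, hγq, hγfix⟩ := hD δ0 hδ0 δ hδ hcomp'
        have hγ1L : γ 1 ∈ L := by
          have e := hγq 1
          rw [show (QuotientGroup.mk (1 : G) : G ⧸ L) = 1 from rfl, h01] at e
          exact (QuotientGroup.eq_one_iff _).1 e
        set γ' : Equiv.Perm G := Equiv.mulRight (γ 1)⁻¹ * γ with hγ'def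
        have hγ'mem : γ' ∈ Γ :=
          Γ.mul_mem (hΓr (mulRight_mem_rightMulGroup _)) (hΓdef ▸ hγmem)
        have hγ'1 : γ' 1 = 1 := by
          rw [hγ'def]
          simp [Equiv.Perm.mul_apply]
        have hγ'q : (QuotientGroup.mk (γ' x) : G ⧸ L) = QuotientGroup.mk y := by
          show (QuotientGroup.mk (γ x * (γ 1)⁻¹) : G ⧸ L) = _
          rw [show (QuotientGroup.mk (γ x * (γ 1)⁻¹) : G ⧸ L)
              = QuotientGroup.mk (γ x) * (QuotientGroup.mk (γ 1))⁻¹ from rfl,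
            (QuotientGroup.eq_one_iff _).2 hγ1L, inv_one, mul_one, hγq x, heq]
        set z : G := γ' x with hzdef
        set c : G := z⁻¹ * y with hcdef
        have hcL : c ∈ L := QuotientGroup.eq.1 hγ'q
        have hzU : z ∉ U := by
          intro hzmem
          have e : y = z * c := by rw [hcdef]; group
          exact hXc hy (e ▸ U.mul_mem hzmem (hLU hcL))
        have hζinj : Function.Injective (fun w : G =>
            if (QuotientGroup.mk w : G ⧸ U) = QuotientGroup.mk z then w * c else w) := by
          intro w w' he
          simp only at he
          by_cases h1w : (QuotientGroup.mk w : G ⧸ U) = QuotientGroup.mk z <;>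
            by_cases h2w : (QuotientGroup.mk w' : G ⧸ U) = QuotientGroup.mk z
          · rw [if_pos h1w, if_pos h2w] at he
            exact mul_right_cancel he
          · rw [if_pos h1w, if_neg h2w] at he
            exact absurd (he ▸ ((mkU_mul_coe U w ⟨c, hLU hcL⟩).trans h1w)) h2w
          · rw [if_neg h1w, if_pos h2w] at he
            exact absurd (he ▸ ((mkU_mul_coe U w' ⟨c, hLU hcL⟩).trans h2w)) h1w
          · rw [if_neg h1w, if_neg h2w] at he
            exact he
        set ζ : Equiv.Perm G := Equiv.ofBijective _ (Finite.injective_iff_bijective.1 hζinj)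
          with hζdef
        have hζapp : ∀ w : G, ζ w =
            if (QuotientGroup.mk w : G ⧸ U) = QuotientGroup.mk z then w * c else w :=
          fun w => rfl
        have hζq : ∀ w : G, (QuotientGroup.mk (ζ w) : G ⧸ L) = QuotientGroup.mk w := by
          intro w
          rw [hζapp]
          split_ifs with h
          · rw [QuotientGroup.eq]
            have e : (w * c)⁻¹ * w = c⁻¹ := by group
            rw [e]
            exact L.inv_mem hcL
          · rfl
        have hζmem : ζ ∈ Γ := by
          rw [hΓdef, mem_gwr]
          constructor
          · exact ⟨1, Δ0.one_mem, fun w => hζq w⟩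
          · intro g
            refine ⟨1, ΔU.one_mem, fun u => ?_⟩
            simp only [Equiv.Perm.one_apply, OneMemClass.coe_one, inv_one, mul_one]
            rw [hζapp, hζapp g, mkU_mul_coe U g u]
            split_ifs with h
            · rw [mul_assoc, mul_comm (↑u : G) c, ← mul_assoc]
            · rfl
        have hζ1 : ζ 1 = 1 := by
          have hne : ¬((QuotientGroup.mk (1 : G) : G ⧸ U) = QuotientGroup.mk z) := by
            intro h
            exact hzU ((QuotientGroup.eq_one_iff z).1 h.symm)
          rw [hζapp, if_neg hne]
        have hζz : ζ z = y := by
          rw [hζapp, if_pos rfl, hcdef]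
          group
        refine ⟨ζ * γ', Γ.mul_mem hζmem hγ'mem, ?_, ?_⟩
        · show ζ (γ' 1) = 1
          rw [hγ'1, hζ1]
        · show ζ (γ' x) = y
          rw [← hzdef, hζz]
  exact ⟨Γ, hΓr, A.basic_eq_orb1_sets horbA⟩


end Backward

/-- Corollary 5.7.  Let `A` be an S-ring over a finite abelian group `G`
satisfying the `U/L`-condition, `S = U/L`.  Then `A` is schurian iff `A_U` and `A_{G/L}`
are schurian and there are permutation groups `Δ_U ≤ Sym(U)` and `Δ₀ ≤ Sym(G/L)` such that
`U_right ≤ Δ_U`, `(G/L)_right ≤ Δ₀`, `Δ_U` permutes the `L`-cosets in `U`,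
`(Δ_U)^{U/L} = (Δ₀)^{U/L}`, `Δ_U` is 2-equivalent to `Aut(A_U)` and `Δ₀` is 2-equivalent to
`Aut(A_{G/L})`. -/
theorem isSchurian_iff_exists_twoEquiv_groups {G : Type*} [CommGroup G] [Fintype G]
    (A : SRing G) (L U : Subgroup G) (hUL : A.ULcondition L U)
    (AU : SRing U) (hAU : AU.basic = A.resBasic U)
    (AGL : SRing (G ⧸ L)) (hAGL : AGL.basic = A.quotBasic L) :
    A.IsSchurian ↔
      (AU.IsSchurian ∧ AGL.IsSchurian ∧
        ∃ (ΔU : Subgroup (Equiv.Perm U)) (Δ0 : Subgroup (Equiv.Perm (G ⧸ L))),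
          rightMulGroup U ≤ ΔU ∧ rightMulGroup (G ⧸ L) ≤ Δ0 ∧
          (∀ d ∈ ΔU, ∀ u v : U,
            (QuotientGroup.mk u : U ⧸ L.subgroupOf U) = QuotientGroup.mk v →
            (QuotientGroup.mk (d u) : U ⧸ L.subgroupOf U) = QuotientGroup.mk (d v)) ∧
          inducedQuot (↑ΔU : Set (Equiv.Perm U)) (L.subgroupOf U)
            = inducedSecOfQuot (↑Δ0 : Set (Equiv.Perm (G ⧸ L))) U ∧
          TwoEquiv (↑ΔU : Set (Equiv.Perm U)) (↑AU.aut : Set (Equiv.Perm U)) ∧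
          TwoEquiv (↑Δ0 : Set (Equiv.Perm (G ⧸ L))) (↑AGL.aut : Set (Equiv.Perm (G ⧸ L)))) := by
  constructor
  · intro hs
    exact forward_dir A L U hUL AU hAU AGL hAGL hs
  · rintro ⟨hAUs, hAGLs, ΔU, Δ0, h1, h2, h3, h4, h5, h6⟩
    exact backward_dir A L U hUL AU hAU AGL hAGL hAUs hAGLs ΔU Δ0 h1 h2 h3 h4 h5 h6
end

section
/- Let G be a finite abelian group, L ≤ U subgroups of G, and S = U/L. Let A₁ be an S-ring over U having L as an A₁-subgroup, and let A₂ be an S-ring over G/L having S as an A₂-subgroup, and suppose that (A₁)_S = (A₂)_S, i.e., the set {π(X) : X a basic set of A₁}, where π: U → U/L is the natural epimorphism, coincides with the set of basic sets of A₂ contained in S. Then there is exactly one S-ring A over G that satisfies the U/L-condition and satisfies A_U = A₁ and A_{G/L} = A₂. -/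
open scoped Pointwise

section AuxLemmas

open scoped Pointwise

variable {V : Type*} [Group V]

lemma mem_unique_basic (A : SRing V) {X Y : Set V} (hX : X ∈ A.basic) (hY : Y ∈ A.basic)
    {a : V} (ha : a ∈ X) (ha' : a ∈ Y) : X = Y := by
  obtain ⟨b, -, hb⟩ := A.isPartition.2 a
  rw [hb X ⟨hX, ha⟩, hb Y ⟨hY, ha'⟩]

lemma basic_nonempty (A : SRing V) {X : Set V} (hX : X ∈ A.basic) : X.Nonempty := by
  rcases Set.eq_empty_or_nonempty X with rfl | h
  · exact absurd hX A.isPartition.1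
  · exact h

lemma exists_basic_mem (A : SRing V) (a : V) : ∃ X ∈ A.basic, a ∈ X := by
  obtain ⟨b, ⟨hb, hab⟩, -⟩ := A.isPartition.2 a
  exact ⟨b, hb, hab⟩

lemma pairCount_eq (X Y : Set V) (z : V) :
    Set.ncard {p : V × V | p.1 ∈ X ∧ p.2 ∈ Y ∧ p.1 * p.2 = z}
      = Set.ncard {a : V | a ∈ X ∧ a⁻¹ * z ∈ Y} := by
  have himg : Prod.fst '' {p : V × V | p.1 ∈ X ∧ p.2 ∈ Y ∧ p.1 * p.2 = z}
      = {a : V | a ∈ X ∧ a⁻¹ * z ∈ Y} := by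
    ext a
    constructor
    · rintro ⟨⟨b, c⟩, ⟨hb, hc, hmul⟩, rfl⟩
      refine ⟨hb, ?_⟩
      simp only at hmul ⊢
      rw [← hmul, inv_mul_cancel_left]
      exact hc
    · rintro ⟨ha, hy⟩
      exact ⟨(a, a⁻¹ * z), ⟨ha, hy, mul_inv_cancel_left a z⟩, rfl⟩
  have hinj : Set.InjOn Prod.fst {p : V × V | p.1 ∈ X ∧ p.2 ∈ Y ∧ p.1 * p.2 = z} := by
    rintro ⟨a, b⟩ ⟨-, -, hab⟩ ⟨a', b'⟩ ⟨-, -, hab'⟩ (h : a = a')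
    subst h
    have hbb : b = b' := mul_left_cancel (hab.trans hab'.symm)
    rw [hbb]
  rw [← himg]
  exact (Set.ncard_image_of_injOn hinj).symm

lemma ccount_basic_const (A : SRing V) {X Y Z : Set V} (hX : X ∈ A.basic) (hY : Y ∈ A.basic)
    (hZ : Z ∈ A.basic) {z z' : V} (hz : z ∈ Z) (hz' : z' ∈ Z) :
    {a : V | a ∈ X ∧ a⁻¹ * z ∈ Y}.ncard = {a : V | a ∈ X ∧ a⁻¹ * z' ∈ Y}.ncard := by
  rw [← pairCount_eq, ← pairCount_eq]
  exact A.structConst X hX Y hY Z hZ z hz z' hz'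

lemma ccount_ASet_const [Finite V] (A : SRing V) {T : Set V} (hT : A.IsASet T)
    {X Z : Set V} (hX : X ∈ A.basic) (hZ : Z ∈ A.basic) {z z' : V} (hz : z ∈ Z) (hz' : z' ∈ Z) :
    {a : V | a ∈ X ∧ a⁻¹ * z ∈ T}.ncard = {a : V | a ∈ X ∧ a⁻¹ * z' ∈ T}.ncard := by
  have key : ∀ (F : Set (Set V)), F.Finite → F ⊆ A.basic →
      {a : V | a ∈ X ∧ a⁻¹ * z ∈ ⋃₀ F}.ncard = {a : V | a ∈ X ∧ a⁻¹ * z' ∈ ⋃₀ F}.ncard := by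
    intro F hF
    refine Set.Finite.induction_on F hF (by simp) ?_
    intro Y F' hYF' hF' IH hsub
    have hY : Y ∈ A.basic := hsub (Set.mem_insert _ _)
    have hsub' : F' ⊆ A.basic := fun W hW => hsub (Set.mem_insert_of_mem _ hW)
    have hdisj : Disjoint Y (⋃₀ F') := by
      rw [Set.disjoint_sUnion_right]
      intro W hW
      rw [Set.disjoint_left]
      intro a haY haW
      exact hYF' (by rw [mem_unique_basic A hY (hsub' hW) haY haW]; exact hW)
    have split : ∀ w : V, {a : V | a ∈ X ∧ a⁻¹ * w ∈ ⋃₀ insert Y F'}.ncard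
        = {a : V | a ∈ X ∧ a⁻¹ * w ∈ Y}.ncard + {a : V | a ∈ X ∧ a⁻¹ * w ∈ ⋃₀ F'}.ncard := by
      intro w
      have heq : {a : V | a ∈ X ∧ a⁻¹ * w ∈ ⋃₀ insert Y F'}
          = {a : V | a ∈ X ∧ a⁻¹ * w ∈ Y} ∪ {a : V | a ∈ X ∧ a⁻¹ * w ∈ ⋃₀ F'} := by
        ext a
        simp only [Set.sUnion_insert, Set.mem_setOf_eq, Set.mem_union]
        tauto
      have hd : Disjoint {a : V | a ∈ X ∧ a⁻¹ * w ∈ Y} {a : V | a ∈ X ∧ a⁻¹ * w ∈ ⋃₀ F'} := by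
        rw [Set.disjoint_left]
        rintro a ⟨-, haY⟩ ⟨-, haF⟩
        exact (Set.disjoint_left.mp hdisj haY) haF
      rw [heq, Set.ncard_union_eq hd (Set.toFinite _) (Set.toFinite _)]
    rw [split z, split z', IH hsub', ccount_basic_const A hX hY hZ hz hz']
  have hTF : T = ⋃₀ {Y : Set V | Y ∈ A.basic ∧ Y ⊆ T} := by
    ext a
    constructor
    · intro haT
      obtain ⟨Y, hY, haY⟩ := exists_basic_mem A a
      exact ⟨Y, ⟨hY, hT Y hY ⟨a, haY, haT⟩⟩, haY⟩
    · rintro ⟨Y, ⟨-, hYT⟩, haY⟩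
      exact hYT haY
  rw [hTF]
  exact key _ (Set.toFinite _) (fun Y hY => hY.1)

lemma ncard_inter_preimage_eq {α β : Type*} [Finite α] (f : α → β) (A : Set α) (c : ℕ)
    (Q : Set β) (hQ : Q.Finite) (hfib : ∀ b ∈ Q, (A ∩ f ⁻¹' {b}).ncard = c) :
    (A ∩ f ⁻¹' Q).ncard = c * Q.ncard := by
  revert hfib
  refine Set.Finite.induction_on Q hQ (by simp) ?_
  intro b Q' hb hQ' IH hfib
  have h1 : A ∩ f ⁻¹' insert b Q' = (A ∩ f ⁻¹' {b}) ∪ (A ∩ f ⁻¹' Q') := by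
    rw [Set.insert_eq, Set.preimage_union, Set.inter_union_distrib_left]
  have hdisj : Disjoint (A ∩ f ⁻¹' {b}) (A ∩ f ⁻¹' Q') := by
    rw [Set.disjoint_left]
    rintro x ⟨-, hx1⟩ ⟨-, hx2⟩
    have hxb : f x = b := hx1
    have hx2' : f x ∈ Q' := hx2
    rw [hxb] at hx2'
    exact hb hx2'
  rw [h1, Set.ncard_union_eq hdisj (Set.toFinite _) (Set.toFinite _),
    hfib b (Set.mem_insert _ _), IH (fun b' hb' => hfib b' (Set.mem_insert_of_mem _ hb')),
    Set.ncard_insert_of_notMem hb hQ']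
  ring

lemma ccount_comm {W : Type*} [CommGroup W] (X Y : Set W) (z : W) :
    {a : W | a ∈ X ∧ a⁻¹ * z ∈ Y}.ncard = {a : W | a ∈ Y ∧ a⁻¹ * z ∈ X}.ncard := by
  have key : ∀ a : W, (a⁻¹ * z)⁻¹ * z = a := by
    intro a
    rw [mul_inv_rev, inv_inv, mul_assoc, mul_comm a z, inv_mul_cancel_left]
  have himg : (fun a => a⁻¹ * z) '' {a : W | a ∈ X ∧ a⁻¹ * z ∈ Y}
      = {a : W | a ∈ Y ∧ a⁻¹ * z ∈ X} := by
    ext b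
    constructor
    · rintro ⟨a, ⟨haX, haY⟩, rfl⟩
      exact ⟨haY, by rw [key a]; exact haX⟩
    · rintro ⟨hbY, hbX⟩
      exact ⟨b⁻¹ * z, ⟨hbX, by rw [key b]; exact hbY⟩, key b⟩
  have hinj : Set.InjOn (fun a => a⁻¹ * z) {a : W | a ∈ X ∧ a⁻¹ * z ∈ Y} := by
    intro a _ b _ h
    have h2 : a⁻¹ = b⁻¹ := mul_right_cancel h
    exact inv_injective h2
  rw [← himg]
  exact (Set.ncard_image_of_injOn hinj).symm

lemma SRing.basic_ext {A B : SRing V} (h : A.basic = B.basic) : A = B := by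
  cases A; cases B
  simp only at h
  subst h
  rfl

end AuxLemmas
/-- Theorem 3.4.  Let `G` be a finite abelian group, `L ≤ U ≤ G`,
`S = U/L`.  Let `A₁` be an S-ring over `U` having `L` as an `A₁`-subgroup and `A₂` an
S-ring over `G/L` having `S` (i.e. the image of `U`) as an `A₂`-subgroup, such that
`(A₁)_S = (A₂)_S`.  Then there is exactly one S-ring `A` over `G` satisfying the
`U/L`-condition with `A_U = A₁` and `A_{G/L} = A₂`. -/
theorem existsUnique_genWreathProduct {G : Type*} [CommGroup G] [Fintype G]
    (L U : Subgroup G) (hLU : L ≤ U)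
    (A₁ : SRing U) (hA₁L : A₁.IsASet ↑(L.subgroupOf U))
    (A₂ : SRing (G ⧸ L)) (hA₂S : A₂.IsASet ↑(U.map (QuotientGroup.mk' L)))
    (hcompat :
      {Z : Set (G ⧸ L) | ∃ X ∈ A₁.basic,
          Z = (fun u : U => (QuotientGroup.mk (u : G) : G ⧸ L)) '' X}
        = {Z : Set (G ⧸ L) | Z ∈ A₂.basic ∧ Z ⊆ ↑(U.map (QuotientGroup.mk' L))}) :
    ∃! A : SRing G,
      A.ULcondition L U ∧ A₁.basic = A.resBasic U ∧ A₂.basic = A.quotBasic L := by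
  classical
  have hnormal : L.Normal := Subgroup.normal_of_comm L
  set mkL : G → G ⧸ L := QuotientGroup.mk with hmkLdef
  set SU : Set (G ⧸ L) := ↑(U.map (QuotientGroup.mk' L)) with hSUdef
  -- basic quotient facts
  have hmk_eq : ∀ a b : G, mkL a = mkL b ↔ a⁻¹ * b ∈ L := fun a b => QuotientGroup.eq
  have hmk_mul : ∀ a b : G, mkL (a * b) = mkL a * mkL b := fun a b => QuotientGroup.mk_mul L a b
  have hmk_inv : ∀ a : G, mkL a⁻¹ = (mkL a)⁻¹ := fun a => QuotientGroup.mk_inv L a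
  have hmk_surj : Function.Surjective mkL := QuotientGroup.mk_surjective
  have hmkU : ∀ x : G, mkL x ∈ SU ↔ x ∈ U := by
    intro x
    constructor
    · intro hx
      rw [hSUdef] at hx
      obtain ⟨u, hu, hux⟩ := hx
      rw [QuotientGroup.mk'_apply] at hux
      have h1 : u⁻¹ * x ∈ L := (hmk_eq u x).mp hux
      have h2 : u⁻¹ * x ∈ U := hLU h1
      have := U.mul_mem hu h2
      rwa [mul_inv_cancel_left] at this
    · intro hx
      exact ⟨x, hx, QuotientGroup.mk'_apply _ _⟩
  have hSUinv : ∀ v : G ⧸ L, v ∈ SU → v⁻¹ ∈ SU := by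
    intro v hv
    rw [hSUdef] at hv ⊢
    exact (U.map (QuotientGroup.mk' L)).inv_mem hv
  -- the two families of basic sets of the glued S-ring
  set B₁ : Set (Set G) := {X | ∃ X₁ ∈ A₁.basic, X = ((↑) : U → G) '' X₁} with hB₁def
  set B₂ : Set (Set G) :=
    {X | ∃ V ∈ A₂.basic, (∀ v ∈ V, v ∉ SU) ∧ X = mkL ⁻¹' V} with hB₂def
  set B : Set (Set G) := B₁ ∪ B₂ with hBdef
  have hB1subU : ∀ X₁ : Set U, (((↑) : U → G) '' X₁) ⊆ ↑U := by
    rintro X₁ _ ⟨u, hu, rfl⟩; exact u.2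
  have hB2notU : ∀ V : Set (G ⧸ L), (∀ v ∈ V, v ∉ SU) → ∀ x ∈ mkL ⁻¹' V, x ∉ U := by
    intro V hVd x hx hxU
    exact hVd (mkL x) hx ((hmkU x).mpr hxU)
  have hB1ne : ∀ X₁ ∈ A₁.basic, (((↑) : U → G) '' X₁).Nonempty := by
    intro X₁ hX₁
    obtain ⟨u, hu⟩ := basic_nonempty A₁ hX₁
    exact ⟨u, u, hu, rfl⟩
  have hB2ne : ∀ V ∈ A₂.basic, (mkL ⁻¹' V : Set G).Nonempty := by
    intro V hV
    obtain ⟨v, hv⟩ := basic_nonempty A₂ hV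
    obtain ⟨g, rfl⟩ := hmk_surj v
    exact ⟨g, hv⟩
  -- images of members of B are basic sets of A₂
  have hImg1 : ∀ X₁ ∈ A₁.basic,
      mkL '' (((↑) : U → G) '' X₁) ∈ A₂.basic ∧ mkL '' (((↑) : U → G) '' X₁) ⊆ SU := by
    intro X₁ hX₁
    have heq : mkL '' (((↑) : U → G) '' X₁)
        = (fun u : U => (QuotientGroup.mk (u : G) : G ⧸ L)) '' X₁ := Set.image_image _ _ _
    have hmem : (fun u : U => (QuotientGroup.mk (u : G) : G ⧸ L)) '' X₁
        ∈ {Z : Set (G ⧸ L) | Z ∈ A₂.basic ∧ Z ⊆ SU} := by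
      rw [← hcompat]
      exact ⟨X₁, hX₁, rfl⟩
    rw [heq]
    exact hmem
  have hImg2 : ∀ V : Set (G ⧸ L), mkL '' (mkL ⁻¹' V) = V :=
    fun V => Set.image_preimage_eq V hmk_surj
  have hImgB : ∀ X ∈ B, mkL '' X ∈ A₂.basic := by
    rintro X (⟨X₁, hX₁, rfl⟩ | ⟨V, hV, hVd, rfl⟩)
    · exact (hImg1 X₁ hX₁).1
    · rw [hImg2]; exact hV
  -- the fibers of mkL on a member of B₁ have constant size
  have hfib1 : ∀ X₁ ∈ A₁.basic, ∃ c : ℕ, ∀ b ∈ mkL '' (((↑) : U → G) '' X₁),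
      ((((↑) : U → G) '' X₁) ∩ mkL ⁻¹' {b}).ncard = c := by
    intro X₁ hX₁
    have htrans : ∀ x : U, (((↑) : U → G) '' X₁) ∩ mkL ⁻¹' {mkL (x : G)}
        = ((↑) : U → G) '' {a : U | a ∈ X₁ ∧ a⁻¹ * x ∈ (↑(L.subgroupOf U) : Set U)} := by
      intro x
      ext g
      constructor
      · rintro ⟨⟨a, ha, rfl⟩, hg2⟩
        have hmk : mkL (a : G) = mkL (x : G) := hg2
        have h1 : (a : G)⁻¹ * (x : G) ∈ L := (hmk_eq _ _).mp hmk
        refine ⟨a, ⟨ha, ?_⟩, rfl⟩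
        rw [SetLike.mem_coe, Subgroup.mem_subgroupOf]
        exact h1
      · rintro ⟨a, ⟨ha, hal⟩, rfl⟩
        rw [SetLike.mem_coe, Subgroup.mem_subgroupOf] at hal
        refine ⟨⟨a, ha, rfl⟩, ?_⟩
        exact Set.mem_preimage.mpr ((hmk_eq _ _).mpr hal)
    obtain ⟨x₀, hx₀⟩ := basic_nonempty A₁ hX₁
    refine ⟨((((↑) : U → G) '' X₁) ∩ mkL ⁻¹' {mkL (x₀ : G)}).ncard, ?_⟩
    rintro b ⟨g, ⟨x, hx, rfl⟩, rfl⟩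
    rw [htrans x, htrans x₀,
      Set.ncard_image_of_injOn (Subtype.val_injective.injOn),
      Set.ncard_image_of_injOn (Subtype.val_injective.injOn)]
    exact ccount_ASet_const A₁ hA₁L hX₁ hX₁ hx hx₀
  -- counting reduction for X ∈ B₁, Y ∈ B₂
  have case12 : ∀ X₁ ∈ A₁.basic, ∀ W ∈ A₂.basic, ∀ z z' : G, ∀ WZ ∈ A₂.basic,
      mkL z ∈ WZ → mkL z' ∈ WZ →
      {a : G | a ∈ ((↑) : U → G) '' X₁ ∧ a⁻¹ * z ∈ mkL ⁻¹' W}.ncard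
        = {a : G | a ∈ ((↑) : U → G) '' X₁ ∧ a⁻¹ * z' ∈ mkL ⁻¹' W}.ncard := by
    intro X₁ hX₁ W hW z z' WZ hWZ hzWZ hz'WZ
    obtain ⟨c, hc⟩ := hfib1 X₁ hX₁
    set X : Set G := ((↑) : U → G) '' X₁ with hXdef
    have hred : ∀ w : G, {a : G | a ∈ X ∧ a⁻¹ * w ∈ mkL ⁻¹' W}.ncard
        = c * {t : G ⧸ L | t ∈ mkL '' X ∧ t⁻¹ * mkL w ∈ W}.ncard := by
      intro w
      have hset : {a : G | a ∈ X ∧ a⁻¹ * w ∈ mkL ⁻¹' W}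
          = X ∩ mkL ⁻¹' {t : G ⧸ L | t ∈ mkL '' X ∧ t⁻¹ * mkL w ∈ W} := by
        ext a
        simp only [Set.mem_setOf_eq, Set.mem_inter_iff, Set.mem_preimage]
        constructor
        · rintro ⟨haX, haW⟩
          refine ⟨haX, ⟨a, haX, rfl⟩, ?_⟩
          rw [← hmk_inv, ← hmk_mul]
          exact haW
        · rintro ⟨haX, -, ht⟩
          refine ⟨haX, ?_⟩
          show mkL (a⁻¹ * w) ∈ W
          rw [hmk_mul, hmk_inv]
          exact ht
      rw [hset, ncard_inter_preimage_eq mkL X c _ (Set.toFinite _) (fun b hb => hc b hb.1)]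
    rw [hred z, hred z']
    congr 1
    exact ccount_basic_const A₂ (hImgB X (Or.inl ⟨X₁, hX₁, hXdef⟩)) hW hWZ hzWZ hz'WZ
  -- counting reduction for X, Y ∈ B₂
  have case22 : ∀ V ∈ A₂.basic, ∀ W ∈ A₂.basic, ∀ z z' : G, ∀ WZ ∈ A₂.basic,
      mkL z ∈ WZ → mkL z' ∈ WZ →
      {a : G | a ∈ mkL ⁻¹' V ∧ a⁻¹ * z ∈ mkL ⁻¹' W}.ncard
        = {a : G | a ∈ mkL ⁻¹' V ∧ a⁻¹ * z' ∈ mkL ⁻¹' W}.ncard := by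
    intro V hV W hW z z' WZ hWZ hzWZ hz'WZ
    have hfib : ∀ b : G ⧸ L, ((Set.univ : Set G) ∩ mkL ⁻¹' {b}).ncard
        = (↑L : Set G).ncard := by
      intro b
      obtain ⟨g, rfl⟩ := hmk_surj b
      have heq : (Set.univ : Set G) ∩ mkL ⁻¹' {mkL g} = (fun y : G => g * y⁻¹) '' ↑L := by
        ext x
        simp only [Set.univ_inter, Set.mem_preimage, Set.mem_singleton_iff, Set.mem_image,
          SetLike.mem_coe]
        constructor
        · intro hx
          have h1 : x⁻¹ * g ∈ L := (hmk_eq x g).mp hx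
          refine ⟨x⁻¹ * g, h1, ?_⟩
          rw [mul_inv_rev, inv_inv, ← mul_assoc, mul_inv_cancel, one_mul]
        · rintro ⟨l, hl, rfl⟩
          refine (hmk_eq _ g).mpr ?_
          rw [mul_inv_rev, inv_inv, mul_assoc, inv_mul_cancel, mul_one]
          exact hl
      rw [heq]
      apply Set.ncard_image_of_injOn
      intro a _ b _ hab
      have : a⁻¹ = b⁻¹ := mul_left_cancel hab
      exact inv_injective this
    have hred : ∀ w : G, {a : G | a ∈ mkL ⁻¹' V ∧ a⁻¹ * w ∈ mkL ⁻¹' W}.ncard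
        = (↑L : Set G).ncard * {t : G ⧸ L | t ∈ V ∧ t⁻¹ * mkL w ∈ W}.ncard := by
      intro w
      have hset : {a : G | a ∈ mkL ⁻¹' V ∧ a⁻¹ * w ∈ mkL ⁻¹' W}
          = (Set.univ : Set G) ∩ mkL ⁻¹' {t : G ⧸ L | t ∈ V ∧ t⁻¹ * mkL w ∈ W} := by
        ext a
        simp only [Set.mem_setOf_eq, Set.univ_inter, Set.mem_inter_iff, Set.mem_preimage,
          Set.mem_univ, true_and]
        constructor
        · rintro ⟨haV, haW⟩
          refine ⟨haV, ?_⟩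
          rw [← hmk_inv, ← hmk_mul]
          exact haW
        · rintro ⟨haV, ht⟩
          refine ⟨haV, ?_⟩
          show mkL (a⁻¹ * w) ∈ W
          rw [hmk_mul, hmk_inv]
          exact ht
      rw [hset, ncard_inter_preimage_eq mkL Set.univ _ _ (Set.toFinite _) (fun b _ => hfib b)]
    rw [hred z, hred z']
    congr 1
    exact ccount_basic_const A₂ hV hW hWZ hzWZ hz'WZ
  -- counting transfer for X, Y ∈ B₁
  have htransU : ∀ X₁ Y₁ : Set U, ∀ zu : U,
      {a : G | a ∈ ((↑) : U → G) '' X₁ ∧ a⁻¹ * (zu : G) ∈ ((↑) : U → G) '' Y₁}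
        = ((↑) : U → G) '' {a : U | a ∈ X₁ ∧ a⁻¹ * zu ∈ Y₁} := by
    intro X₁ Y₁ zu
    ext g
    constructor
    · rintro ⟨⟨a, ha, rfl⟩, hg2⟩
      obtain ⟨b, hb, hbe⟩ := hg2
      refine ⟨a, ⟨ha, ?_⟩, rfl⟩
      have : b = a⁻¹ * zu := Subtype.ext hbe
      rwa [this] at hb
    · rintro ⟨a, ⟨ha, hy⟩, rfl⟩
      exact ⟨⟨a, ha, rfl⟩, ⟨a⁻¹ * zu, hy, rfl⟩⟩
  -- empty count when z ∉ U, for X, Y ∈ B₁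
  have hC0 : ∀ X₁ Y₁ : Set U, ∀ z : G, z ∉ U →
      {a : G | a ∈ ((↑) : U → G) '' X₁ ∧ a⁻¹ * z ∈ ((↑) : U → G) '' Y₁} = ∅ := by
    intro X₁ Y₁ z hz
    ext a
    simp only [Set.mem_setOf_eq, Set.mem_empty_iff_false, iff_false, not_and]
    rintro ⟨u, -, rfl⟩ ⟨v, -, hv⟩
    apply hz
    have : (u : G) * ((u : G)⁻¹ * z) ∈ U := U.mul_mem u.2 (hv ▸ v.2)
    rwa [mul_inv_cancel_left] at this
  -- Now assemble the S-ring structure on B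
  have hpart : Setoid.IsPartition B := by
    constructor
    · rintro (⟨X₁, hX₁, hXe⟩ | ⟨V, hV, hVd, hXe⟩)
      · exact absurd hXe.symm (Set.nonempty_iff_ne_empty.mp (hB1ne X₁ hX₁))
      · exact absurd hXe.symm (Set.nonempty_iff_ne_empty.mp (hB2ne V hV))
    · intro a
      by_cases haU : a ∈ U
      · obtain ⟨X₁, hX₁, haX₁⟩ := exists_basic_mem A₁ ⟨a, haU⟩
        refine ⟨((↑) : U → G) '' X₁, ⟨Or.inl ⟨X₁, hX₁, rfl⟩, ⟨⟨a, haU⟩, haX₁, rfl⟩⟩, ?_⟩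
        rintro Y ⟨(⟨Y₁, hY₁, rfl⟩ | ⟨V, hV, hVd, rfl⟩), haY⟩
        · obtain ⟨u, hu, huv⟩ := haY
          have hu' : u = ⟨a, haU⟩ := Subtype.ext huv
          rw [mem_unique_basic A₁ hY₁ hX₁ (hu' ▸ hu) haX₁]
        · exact absurd ((hmkU a).mpr haU) (hVd (mkL a) haY)
      · obtain ⟨V, hV, haV⟩ := exists_basic_mem A₂ (mkL a)
        have hVd : ∀ v ∈ V, v ∉ SU := by
          intro v hv hvSU
          exact haU ((hmkU a).mp ((hA₂S V hV ⟨v, hv, hvSU⟩) haV))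
        refine ⟨mkL ⁻¹' V, ⟨Or.inr ⟨V, hV, hVd, rfl⟩, haV⟩, ?_⟩
        rintro Y ⟨(⟨Y₁, hY₁, rfl⟩ | ⟨W, hW, hWd, rfl⟩), haY⟩
        · obtain ⟨u, -, huv⟩ := haY
          exact absurd (huv ▸ u.2) haU
        · rw [mem_unique_basic A₂ hW hV haY haV]
  have hone : {(1 : G)} ∈ B := by
    refine Or.inl ⟨{(1 : U)}, A₁.one_mem, ?_⟩
    rw [Set.image_singleton, OneMemClass.coe_one]
  have hinv : ∀ X ∈ B, X⁻¹ ∈ B := by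
    rintro X (⟨X₁, hX₁, rfl⟩ | ⟨V, hV, hVd, rfl⟩)
    · refine Or.inl ⟨X₁⁻¹, A₁.inv_mem X₁ hX₁, ?_⟩
      ext x
      constructor
      · intro hx
        have hx' : x⁻¹ ∈ ((↑) : U → G) '' X₁ := hx
        obtain ⟨a, ha, hax⟩ := hx'
        refine ⟨a⁻¹, ?_, ?_⟩
        · show (a⁻¹)⁻¹ ∈ X₁
          rwa [inv_inv]
        · show ((a : G))⁻¹ = x
          rw [hax, inv_inv]
      · rintro ⟨a, ha, rfl⟩
        show ((a : G))⁻¹ ∈ ((↑) : U → G) '' X₁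
        exact ⟨a⁻¹, ha, rfl⟩
    · refine Or.inr ⟨V⁻¹, A₂.inv_mem V hV, ?_, ?_⟩
      · intro v hv hvSU
        rw [Set.mem_inv] at hv
        exact hVd v⁻¹ hv (by simpa using hSUinv v hvSU)
      · ext x
        simp only [Set.mem_inv, Set.mem_preimage]
        rw [hmk_inv]
  have hstruct : ∀ X ∈ B, ∀ Y ∈ B, ∀ Z ∈ B, ∀ z ∈ Z, ∀ z' ∈ Z,
      Set.ncard {p : G × G | p.1 ∈ X ∧ p.2 ∈ Y ∧ p.1 * p.2 = z}
        = Set.ncard {p : G × G | p.1 ∈ X ∧ p.2 ∈ Y ∧ p.1 * p.2 = z'} := by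
    intro X hX Y hY Z hZ z hz z' hz'
    rw [pairCount_eq, pairCount_eq]
    have hWZ : mkL '' Z ∈ A₂.basic := hImgB Z hZ
    have hzWZ : mkL z ∈ mkL '' Z := ⟨z, hz, rfl⟩
    have hz'WZ : mkL z' ∈ mkL '' Z := ⟨z', hz', rfl⟩
    rcases hX with ⟨X₁, hX₁, rfl⟩ | ⟨V, hV, hVd, rfl⟩
    · rcases hY with ⟨Y₁, hY₁, rfl⟩ | ⟨W, hW, hWd, rfl⟩
      · -- both in B₁
        rcases hZ with ⟨Z₁, hZ₁, rfl⟩ | ⟨VZ, hVZ, hVZd, rfl⟩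
        · obtain ⟨zu, hzu, rfl⟩ := hz
          obtain ⟨z'u, hz'u, rfl⟩ := hz'
          rw [htransU X₁ Y₁ zu, htransU X₁ Y₁ z'u,
            Set.ncard_image_of_injOn (Subtype.val_injective.injOn),
            Set.ncard_image_of_injOn (Subtype.val_injective.injOn)]
          exact ccount_basic_const A₁ hX₁ hY₁ hZ₁ hzu hz'u
        · have hzU : z ∉ U := hB2notU VZ hVZd z hz
          have hz'U : z' ∉ U := hB2notU VZ hVZd z' hz'
          rw [hC0 X₁ Y₁ z hzU, hC0 X₁ Y₁ z' hz'U]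
      · exact case12 X₁ hX₁ W hW z z' (mkL '' Z) hWZ hzWZ hz'WZ
    · rcases hY with ⟨Y₁, hY₁, rfl⟩ | ⟨W, hW, hWd, rfl⟩
      · rw [ccount_comm, ccount_comm (mkL ⁻¹' V) _ z']
        exact case12 Y₁ hY₁ V hV z z' (mkL '' Z) hWZ hzWZ hz'WZ
      · exact case22 V hV W hW z z' (mkL '' Z) hWZ hzWZ hz'WZ
  refine ⟨⟨B, hpart, hone, hinv, hstruct⟩, ⟨?_, ?_, ?_⟩, ?_⟩
  · -- UL condition
    refine ⟨hnormal, hLU, ?_, ?_, ?_⟩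
    · -- L is an A-set
      rintro X (⟨Y₁, hY₁, rfl⟩ | ⟨V, hV, hVd, rfl⟩) ⟨x, hxX, hxL⟩
      · obtain ⟨a, ha, rfl⟩ := hxX
        have haL : a ∈ L.subgroupOf U := Subgroup.mem_subgroupOf.mpr hxL
        have hsub : Y₁ ⊆ ↑(L.subgroupOf U) := hA₁L Y₁ hY₁ ⟨a, ha, haL⟩
        rintro g ⟨b, hb, rfl⟩
        exact Subgroup.mem_subgroupOf.mp (hsub hb)
      · exact absurd (hLU hxL) (hB2notU V hVd x hxX)
    · -- U is an A-set
      rintro X (⟨Y₁, hY₁, rfl⟩ | ⟨V, hV, hVd, rfl⟩) ⟨x, hxX, hxU⟩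
      · exact hB1subU Y₁
      · exact absurd hxU (hB2notU V hVd x hxX)
    · -- outside sets are unions of L-cosets
      rintro X (⟨Y₁, hY₁, rfl⟩ | ⟨V, hV, hVd, rfl⟩) hXc
      · obtain ⟨g, hg⟩ := hB1ne Y₁ hY₁
        exact absurd (hB1subU Y₁ hg) (hXc hg)
      · have hmul : (↑L : Set G) * (mkL ⁻¹' V) = mkL ⁻¹' V := by
          ext x
          rw [Set.mem_mul]
          constructor
          · rintro ⟨l, hl, y, hy, rfl⟩
            show mkL (l * y) ∈ V
            rw [hmk_mul]
            have hl1 : mkL l = 1 := (QuotientGroup.eq_one_iff l).mpr hl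
            rw [hl1, one_mul]
            exact hy
          · intro hx
            exact ⟨1, L.one_mem, x, hx, one_mul x⟩
        constructor
        · exact hmul
        · rw [mul_comm (mkL ⁻¹' V) (↑L : Set G)]
          exact hmul
  · -- A₁.basic = resBasic
    ext X₁
    constructor
    · intro hX₁
      refine ⟨((↑) : U → G) '' X₁, Or.inl ⟨X₁, hX₁, rfl⟩, hB1subU X₁, ?_⟩
      rw [Set.preimage_image_eq X₁ Subtype.val_injective]
    · rintro ⟨X, hX, hXU, rfl⟩
      rcases hX with ⟨Y₁, hY₁, rfl⟩ | ⟨V, hV, hVd, rfl⟩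
      · rw [Set.preimage_image_eq Y₁ Subtype.val_injective]
        exact hY₁
      · obtain ⟨x, hx⟩ := hB2ne V hV
        exact absurd (hXU hx) (hB2notU V hVd x hx)
  · -- A₂.basic = quotBasic
    ext V
    constructor
    · intro hV
      by_cases hint : (V ∩ SU).Nonempty
      · have hVsub : V ⊆ SU := hA₂S V hV hint
        have hmem : V ∈ {Z : Set (G ⧸ L) | ∃ X ∈ A₁.basic,
            Z = (fun u : U => (QuotientGroup.mk (u : G) : G ⧸ L)) '' X} := by
          rw [hcompat]
          exact ⟨hV, hVsub⟩
        obtain ⟨X₁, hX₁, rfl⟩ := hmem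
        refine ⟨((↑) : U → G) '' X₁, Or.inl ⟨X₁, hX₁, rfl⟩, ?_⟩
        rw [Set.image_image]
      · have hVd : ∀ v ∈ V, v ∉ SU := fun v hv hvSU => hint ⟨v, hv, hvSU⟩
        exact ⟨mkL ⁻¹' V, Or.inr ⟨V, hV, hVd, rfl⟩, (hImg2 V).symm⟩
    · rintro ⟨X, hX, rfl⟩
      exact hImgB X hX
  · -- uniqueness
    rintro A' ⟨⟨-, -, hLset, hUset, houter⟩, h2, h3⟩
    apply SRing.basic_ext
    show A'.basic = B
    ext X
    constructor
    · intro hX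
      by_cases hXU : (X ∩ (↑U : Set G)).Nonempty
      · have hsub : X ⊆ ↑U := hUset X hX hXU
        have hres : (((↑) : U → G) ⁻¹' X) ∈ A'.resBasic U := ⟨X, hX, hsub, rfl⟩
        rw [← h2] at hres
        refine Or.inl ⟨((↑) : U → G) ⁻¹' X, hres, ?_⟩
        rw [Set.image_preimage_eq_of_subset]
        rw [Subtype.range_coe]
        exact hsub
      · have hcomp : X ⊆ (↑U : Set G)ᶜ := fun x hx hxU => hXU ⟨x, hx, hxU⟩
        obtain ⟨hLX, hXL⟩ := houter X hX hcomp
        have hquot : mkL '' X ∈ A'.quotBasic L := ⟨X, hX, rfl⟩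
        rw [← h3] at hquot
        have hVd : ∀ v ∈ mkL '' X, v ∉ SU := by
          rintro v ⟨x, hx, rfl⟩ hvSU
          exact (hcomp hx) ((hmkU x).mp hvSU)
        refine Or.inr ⟨mkL '' X, hquot, hVd, ?_⟩
        ext y
        constructor
        · intro hy
          exact ⟨y, hy, rfl⟩
        · rintro ⟨x, hx, hxy⟩
          have h1 : x⁻¹ * y ∈ L := (hmk_eq x y).mp hxy
          have : x * (x⁻¹ * y) ∈ X * (↑L : Set G) :=
            Set.mul_mem_mul hx h1
          rw [mul_inv_cancel_left] at this
          rwa [hXL] at this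
    · rintro (⟨X₁, hX₁, rfl⟩ | ⟨V, hV, hVd, rfl⟩)
      · rw [h2] at hX₁
        obtain ⟨X, hX, hXU, rfl⟩ := hX₁
        rw [Set.image_preimage_eq_of_subset]
        · exact hX
        · rw [Subtype.range_coe]
          exact hXU
      · rw [h3] at hV
        obtain ⟨X, hX, rfl⟩ := hV
        have hcomp : X ⊆ (↑U : Set G)ᶜ := by
          intro x hx hxU
          exact hVd (mkL x) ⟨x, hx, rfl⟩ ((hmkU x).mpr hxU)
        obtain ⟨hLX, hXL⟩ := houter X hX hcomp
        have heq : mkL ⁻¹' (mkL '' X) = X := by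
          ext y
          constructor
          · rintro ⟨x, hx, hxy⟩
            have h1 : x⁻¹ * y ∈ L := (hmk_eq x y).mp hxy
            have h2 : x * (x⁻¹ * y) ∈ X * (↑L : Set G) := Set.mul_mem_mul hx h1
            rw [mul_inv_cancel_left] at h2
            rwa [hXL] at h2
          · intro hy
            exact ⟨y, hy, rfl⟩
        rw [heq]
        exact hX
end
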